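/- arXiv:1703.07230 — 7 statements merged into one kernel-verified Lean document; each statement's English description precedes it below -/
import Mathlib

section
/- Fix a finite frequency set I ⊂ ℤ^d with |I| = T, a frequency k ∈ I, and a prime number M such that the map h ↦ h mod M is injective on I. Then the number of vectors z ∈ {0,…,M−1}^d ∩ ℤ^d for which there exists h ∈ I∖{k} with k·z ≡ h·z (mod M) is at most (T−1)·M^{d−1}; equivalently, if z is uniformly distributed on {0,…,M−1}^d ∩ ℤ^d, then the probability that k aliases to at least one other frequency within I with respect to Λ(z,M) is at most (T−1)/M. -/
/-!
Aliasing of `k` with `h` means that `z` mod `M` lies on the hyperplane `(k - h) ⬝ᵥ w = 0` of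
`(ZMod M)^d`. Injectivity of reduction mod `M` on `I` makes `k - h` nonzero mod `M`, so over the
field `ZMod M` this hyperplane has exactly `M^(d-1)` points; a union bound over the `T - 1`
choices of `h` finishes.
-/

open Finset Matrix Module

section Hyperplanes

variable {K ι : Type*} [Field K] [Fintype ι]

theorem Module.Dual.natCard_ker_of_ne_zero {V : Type*} [AddCommGroup V] [Module K V]
    [FiniteDimensional K V] {f : Dual K V} (hf : f ≠ 0) :
    Nat.card (LinearMap.ker f) = Nat.card K ^ (finrank K V - 1) := by
  rw [Module.natCard_eq_pow_finrank (K := K), ← f.finrank_ker_add_one_of_ne_zero hf,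
    Nat.add_sub_cancel]

theorem natCard_dotProduct_eq_zero {c : ι → K} (hc : c ≠ 0) :
    Nat.card {w : ι → K // c ⬝ᵥ w = 0} = Nat.card K ^ (Nat.card ι - 1) := by
  classical
  have hf : dotProductEquiv K ι c ≠ 0 := (LinearEquiv.map_ne_zero_iff _).mpr hc
  rw [Nat.card_eq_fintype_card (α := ι), ← Module.finrank_fintype_fun_eq_card K,
    ← Dual.natCard_ker_of_ne_zero hf]
  rfl

theorem natCard_exists_dotProduct_eq_zero_le [Finite K] (s : Finset (ι → K)) (hs : 0 ∉ s) :
    Nat.card {w : ι → K // ∃ c ∈ s, c ⬝ᵥ w = 0} ≤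
      #s * Nat.card K ^ (Nat.card ι - 1) := by
  classical
  have := Fintype.ofFinite K
  have hunion : ({w | ∃ c ∈ s, c ⬝ᵥ w = 0} : Finset (ι → K)) =
      s.biUnion fun c => {w | c ⬝ᵥ w = 0} := by
    ext w; simp
  rw [Nat.card_eq_fintype_card, Fintype.card_subtype, hunion]
  refine card_biUnion_le_card_mul _ _ _ fun c hc => ?_
  rw [← Fintype.card_subtype, ← Nat.card_eq_fintype_card]
  refine (natCard_dotProduct_eq_zero ?_).le
  rintro rfl
  exact hs hc

end Hyperplanes

theorem emod_sum_mul_eq_iff_dotProduct_eq_zero {ι : Type*} [Fintype ι] (M : ℕ)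
    (k h z : ι → ℤ) :
    (∑ i, k i * z i) % (M : ℤ) = (∑ i, h i * z i) % (M : ℤ) ↔
      (fun i => ((k i - h i : ℤ) : ZMod M)) ⬝ᵥ (fun i => (z i : ZMod M)) = 0 := by
  rw [← ZMod.intCast_eq_intCast_iff', dotProduct, ← sub_eq_zero]
  push_cast
  simp only [sub_mul, sum_sub_distrib]

theorem intCast_sub_ne_zero_of_emod_ne {ι : Type*} {M : ℕ} {k h : ι → ℤ}
    (hkh : (fun i => k i % (M : ℤ)) ≠ fun i => h i % (M : ℤ)) :
    (fun i => ((k i - h i : ℤ) : ZMod M)) ≠ 0 := by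
  refine fun hzero => hkh (funext fun i => ?_)
  rw [← ZMod.intCast_eq_intCast_iff', ← sub_eq_zero, ← Int.cast_sub]
  exact congrFun hzero i

theorem ZMod.natCast_finVal_injective (M : ℕ) [NeZero M] :
    Function.Injective fun a : Fin M => ((a : ℕ) : ZMod M) := fun a b hab => by
  have := congrArg ZMod.val hab
  simp only [ZMod.val_natCast_of_lt a.isLt, ZMod.val_natCast_of_lt b.isLt] at this
  exact Fin.ext this

/-- fix a finite frequency set `I ⊂ ℤ^d` with `|I| = T`, a frequency `k ∈ I`
and a prime `M` such that `h ↦ h mod M` is injective on `I`. Then the number of vectors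
`z ∈ {0,…,M-1}^d` for which `k` aliases to at least one other frequency of `I` modulo `M`
(i.e. `∃ h ∈ I∖{k}` with `k·z ≡ h·z (mod M)`) is at most `(T-1)·M^{d-1}`; equivalently,
for uniformly random `z` the aliasing probability is at most `(T-1)/M`. -/
theorem statement4 {d : ℕ} (I : Finset (Fin d → ℤ)) (T : ℕ) (hT : I.card = T)
    (k : Fin d → ℤ) (hk : k ∈ I) (M : ℕ) (hM : M.Prime)
    (hinj : Set.InjOn (fun h : Fin d → ℤ => fun i => h i % (M : ℤ)) (↑I : Set (Fin d → ℤ))) :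
    Nat.card {z : Fin d → Fin M // ∃ h ∈ I, h ≠ k ∧
        (∑ i, k i * ((z i : ℕ) : ℤ)) % (M : ℤ) = (∑ i, h i * ((z i : ℕ) : ℤ)) % (M : ℤ)}
      ≤ (T - 1) * M ^ (d - 1) := by
  classical
  have : Fact M.Prime := ⟨hM⟩
  let S := (I.erase k).image fun h i => ((k i - h i : ℤ) : ZMod M)
  have hS : 0 ∉ S := by
    simp only [S, mem_image, mem_erase, not_exists, not_and]
    exact fun h ⟨hne, hh⟩ =>
      intCast_sub_ne_zero_of_emod_ne fun heq => hne (hinj hh hk heq.symm)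
  calc _ ≤ Nat.card {w : Fin d → ZMod M // ∃ c ∈ S, c ⬝ᵥ w = 0} := by
        refine Nat.card_le_card_of_injective
          (fun z => ⟨fun i => ((z.1 i : ℕ) : ZMod M), ?_⟩) fun z z' hzz' => ?_
        · obtain ⟨h, hh, hne, hmod⟩ := z.2
          refine ⟨_, mem_image_of_mem _ (mem_erase.mpr ⟨hne, hh⟩), ?_⟩
          simpa using (emod_sum_mul_eq_iff_dotProduct_eq_zero M k h _).mp hmod
        · exact Subtype.ext <|
            (ZMod.natCast_finVal_injective M).comp_left (congrArg Subtype.val hzz')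
    _ ≤ #S * M ^ (d - 1) := by
        simpa using natCard_exists_dotProduct_eq_zero_le S hS
    _ ≤ (T - 1) * M ^ (d - 1) := by
        gcongr
        exact card_image_le.trans (card_erase_of_mem hk ▸ hT ▸ le_rfl)
end

section
/- Let I ⊂ ℤ^d be a finite frequency set with |I| = T ≥ 2, fix k ∈ I, let δ ∈ (0,1) and c > 1 be real numbers, let λ ≥ c(T−1), and let s be an integer with s ≥ (c/(c−1))² (ln T − ln δ)/2. Let M_1,…,M_s be prime numbers (not necessarily distinct) with M_ℓ > λ and such that the map h ↦ h mod M_ℓ is injective on I for each ℓ. If z_1,…,z_s are independent random vectors with z_ℓ uniformly distributed on {0,…,M_ℓ−1}^d ∩ ℤ^d, then the probability that for every ℓ ∈ {1,…,s} there exists h ∈ I∖{k} with k·z_ℓ ≡ h·z_ℓ (mod M_ℓ) is at most δ/T. -/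
/-! For a single lattice, `k` aliases to `h` exactly when `z` lies on the hyperplane
`(k - h) ⬝ᵥ z = 0` over `𝔽_M`. Injectivity of reduction mod `M` on `I` makes `k - h` nonzero mod
`M`, so that hyperplane contains a fraction `1/M` of all `z`, and a union bound over the `T - 1`
frequencies `h ≠ k` bounds the aliasing fraction by `(T - 1)/M < 1/c`. Independence multiplies
these to `c⁻ˢ`, and `log c ≥ 2((c - 1)/c)²` (from `log (1 + x) ≥ 2x/(2 + x)`) turns the lower
bound on `s` into `c⁻ˢ ≤ δ/T`. -/

open Finset Matrix

theorem natCard_ker_mul_natCard_of_ne_zero {K V : Type*} [Field K] [Finite K] [AddCommGroup V]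
    [Module K V] [Module.Finite K V] {f : Module.Dual K V} (hf : f ≠ 0) :
    Nat.card (LinearMap.ker f) * Nat.card K = Nat.card V := by
  rw [Module.natCard_eq_pow_finrank (K := K) (V := V), Module.natCard_eq_pow_finrank (K := K),
    ← pow_succ, Module.Dual.finrank_ker_add_one_of_ne_zero hf]

theorem natCard_dotProduct_eq_zero_mul_natCard {K ι : Type*} [Field K] [Finite K] [Fintype ι]
    {a : ι → K} (ha : a ≠ 0) :
    Nat.card {z : ι → K // a ⬝ᵥ z = 0} * Nat.card K = Nat.card K ^ Nat.card ι := by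
  classical
  have hf : dotProductEquiv K ι a ≠ 0 := by simpa using ha
  rw [← Nat.card_fun, ← natCard_ker_mul_natCard_of_ne_zero hf]
  rfl

theorem natCard_exists_dotProduct_eq_zero_mul_natCard_le {K ι α : Type*} [Field K] [Fintype K]
    [Fintype ι] (s : Finset α) (a : α → ι → K) (ha : ∀ x ∈ s, a x ≠ 0) :
    Nat.card {z : ι → K // ∃ x ∈ s, a x ⬝ᵥ z = 0} * Nat.card K ≤ #s * Nat.card K ^ Nat.card ι := by
  classical
  have hcard : ∀ p : (ι → K) → Prop, [DecidablePred p] → Nat.card {z // p z} = #{z | p z} :=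
    fun p _ => by rw [Nat.card_eq_fintype_card, Fintype.card_subtype]
  calc Nat.card {z : ι → K // ∃ x ∈ s, a x ⬝ᵥ z = 0} * Nat.card K
      = #(s.biUnion fun x => {z | a x ⬝ᵥ z = 0}) * Nat.card K := by
        rw [hcard]; congr 2; ext z; simp
    _ ≤ (∑ x ∈ s, #{z | a x ⬝ᵥ z = 0}) * Nat.card K := by gcongr; exact card_biUnion_le
    _ = ∑ x ∈ s, Nat.card K ^ Nat.card ι := by
        rw [sum_mul]
        refine sum_congr rfl fun x hx => ?_
        rw [← hcard, natCard_dotProduct_eq_zero_mul_natCard (ha x hx)]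
    _ = #s * Nat.card K ^ Nat.card ι := by rw [sum_const, smul_eq_mul]

section Aliasing

variable {ι : Type*} [Fintype ι]

def AliasesWithin (I : Finset (ι → ℤ)) (k : ι → ℤ) (M : ℕ) (z : ι → Fin M) : Prop :=
  ∃ h ∈ I, h ≠ k ∧
    (∑ i, k i * ((z i : ℕ) : ℤ)) % (M : ℤ) = (∑ i, h i * ((z i : ℕ) : ℤ)) % (M : ℤ)

theorem emod_sum_mul_eq_emod_sum_mul_iff {M : ℕ} (k h x : ι → ℤ) :
    (∑ i, k i * x i) % (M : ℤ) = (∑ i, h i * x i) % (M : ℤ) ↔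
      (fun i => ((k i - h i : ℤ) : ZMod M)) ⬝ᵥ (fun i => (x i : ZMod M)) = 0 := by
  rw [← ZMod.intCast_eq_intCast_iff', ← sub_eq_zero]
  push_cast
  simp only [dotProduct, sub_mul, sum_sub_distrib]

theorem natCard_aliasesWithin_mul_le {M : ℕ} (hM : M.Prime) {I : Finset (ι → ℤ)} {k : ι → ℤ}
    (hk : k ∈ I) (hinj : Set.InjOn (fun h : ι → ℤ => fun i => h i % (M : ℤ)) I) :
    Nat.card {z : ι → Fin M // AliasesWithin I k M z} * M ≤ #(I.erase k) * M ^ Nat.card ι := by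
  have : Fact M.Prime := ⟨hM⟩
  set a : (ι → ℤ) → ι → ZMod M := fun h i => ((k i - h i : ℤ) : ZMod M)
  set embed : (ι → Fin M) → ι → ZMod M := fun z i => (((z i : ℕ) : ℤ) : ZMod M)
  have ha : ∀ h ∈ I.erase k, a h ≠ 0 := by
    intro h hh hzero
    obtain ⟨hne, hI⟩ := mem_erase.1 hh
    refine hne (hinj hI hk (funext fun i => ?_))
    have hi := congrFun hzero i
    simp only [a, Pi.zero_apply, Int.cast_sub, sub_eq_zero] at hi
    exact ((ZMod.intCast_eq_intCast_iff' _ _ _).1 hi).symm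
  have hembed : Function.Injective embed := by
    intro z w hzw
    funext i
    have hi := congrFun hzw i
    simp only [embed, Int.cast_natCast, ZMod.natCast_eq_natCast_iff', Nat.mod_eq_of_lt (z i).2,
      Nat.mod_eq_of_lt (w i).2] at hi
    exact Fin.ext hi
  have hmaps : ∀ z, AliasesWithin I k M z → ∃ h ∈ I.erase k, a h ⬝ᵥ embed z = 0 := by
    rintro z ⟨h, hI, hne, hmod⟩
    exact ⟨h, mem_erase.2 ⟨hne, hI⟩, (emod_sum_mul_eq_emod_sum_mul_iff k h _).1 hmod⟩
  calc Nat.card {z : ι → Fin M // AliasesWithin I k M z} * M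
      ≤ Nat.card {w : ι → ZMod M // ∃ h ∈ I.erase k, a h ⬝ᵥ w = 0} * Nat.card (ZMod M) := by
        rw [Nat.card_zmod]
        gcongr
        exact Nat.card_le_card_of_injective (fun z => ⟨embed z.1, hmaps z.1 z.2⟩)
          fun z w hzw => Subtype.ext (hembed (congrArg Subtype.val hzw))
    _ ≤ #(I.erase k) * M ^ Nat.card ι := by
        simpa only [Nat.card_zmod] using natCard_exists_dotProduct_eq_zero_mul_natCard_le _ a ha

theorem natCard_aliasesWithin_le {M : ℕ} (hM : M.Prime) {I : Finset (ι → ℤ)} {k : ι → ℤ}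
    (hk : k ∈ I) (hinj : Set.InjOn (fun h : ι → ℤ => fun i => h i % (M : ℤ)) I) {c : ℝ} (hc : 0 < c)
    (hcM : c * #(I.erase k) ≤ M) :
    (Nat.card {z : ι → Fin M // AliasesWithin I k M z} : ℝ) ≤ c⁻¹ * (M : ℝ) ^ Nat.card ι := by
  have hcount : (Nat.card {z : ι → Fin M // AliasesWithin I k M z} : ℝ) * M
      ≤ #(I.erase k) * (M : ℝ) ^ Nat.card ι := by
    exact_mod_cast natCard_aliasesWithin_mul_le hM hk hinj
  have hM0 : (0 : ℝ) < M := by exact_mod_cast hM.pos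
  rw [le_inv_mul_iff₀ hc]
  refine le_of_mul_le_mul_right ?_ hM0
  calc c * Nat.card {z : ι → Fin M // AliasesWithin I k M z} * M
      ≤ c * (#(I.erase k) * (M : ℝ) ^ Nat.card ι) := by rw [mul_assoc]; gcongr
    _ = c * #(I.erase k) * (M : ℝ) ^ Nat.card ι := by ring
    _ ≤ M * (M : ℝ) ^ Nat.card ι := by gcongr
    _ = (M : ℝ) ^ Nat.card ι * M := mul_comm _ _

end Aliasing

theorem two_le_sq_div_sub_one_mul_log {c : ℝ} (hc : 1 < c) :
    2 ≤ (c / (c - 1)) ^ 2 * Real.log c := by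
  have hlog : 2 * (c - 1) / (c + 1) ≤ Real.log c := by
    have h := Real.le_log_one_add_of_nonneg (x := c - 1) (by linarith)
    rwa [add_sub_cancel, show c - 1 + 2 = c + 1 by ring] at h
  have hc1 : 0 < c - 1 := by linarith
  calc (2 : ℝ) ≤ (c / (c - 1)) ^ 2 * (2 * (c - 1) / (c + 1)) := by
        rw [div_pow, div_mul_div_comm, le_div_iff₀ (by positivity)]
        nlinarith
    _ ≤ (c / (c - 1)) ^ 2 * Real.log c := by gcongr

theorem inv_pow_le_div_of_sq_mul_log_le {δ c T : ℝ} {s : ℕ} (hδ : 0 < δ) (hδT : δ ≤ T) (hc : 1 < c)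
    (hs : (c / (c - 1)) ^ 2 * (Real.log T - Real.log δ) / 2 ≤ s) :
    c⁻¹ ^ s ≤ δ / T := by
  have hT : 0 < T := hδ.trans_le hδT
  have hL : 0 ≤ Real.log T - Real.log δ := sub_nonneg.2 (Real.log_le_log hδ hδT)
  have hlogc : 0 ≤ Real.log c := Real.log_nonneg hc.le
  have hlog : Real.log (T / δ) ≤ Real.log (c ^ s) := by
    rw [Real.log_div hT.ne' hδ.ne', Real.log_pow]
    calc Real.log T - Real.log δ
        ≤ (c / (c - 1)) ^ 2 * (Real.log T - Real.log δ) / 2 * Real.log c := by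
          nlinarith [two_le_sq_div_sub_one_mul_log hc]
      _ ≤ s * Real.log c := by gcongr
  rw [inv_pow]
  refine inv_le_of_inv_le₀ (by positivity) ?_
  rw [inv_div]
  exact (Real.log_le_log_iff (by positivity) (by positivity)).1 hlog

theorem statement5_general {d : ℕ} (I : Finset (Fin d → ℤ)) (T : ℕ) (hT : I.card = T)
    (k : Fin d → ℤ) (hk : k ∈ I)
    (δ c lam : ℝ) (hδ0 : 0 < δ) (hδ1 : δ < 1) (hc : 1 < c)
    (hlam : c * ((T : ℝ) - 1) ≤ lam)
    (s : ℕ) (hs : (c / (c - 1)) ^ 2 * (Real.log T - Real.log δ) / 2 ≤ s)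
    (M : Fin s → ℕ) (hMp : ∀ ℓ, (M ℓ).Prime) (hMgt : ∀ ℓ, lam < M ℓ)
    (hinj : ∀ ℓ, Set.InjOn (fun h : Fin d → ℤ => fun i => h i % (M ℓ : ℤ))
      (↑I : Set (Fin d → ℤ))) :
    (Nat.card {z : (ℓ : Fin s) → Fin d → Fin (M ℓ) //
        ∀ ℓ, ∃ h ∈ I, h ≠ k ∧
          (∑ i, k i * ((z ℓ i : ℕ) : ℤ)) % (M ℓ : ℤ)
            = (∑ i, h i * ((z ℓ i : ℕ) : ℤ)) % (M ℓ : ℤ)} : ℝ)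
      ≤ δ / T * ∏ ℓ, (M ℓ : ℝ) ^ d := by
  have hTerase : (#(I.erase k) : ℝ) = T - 1 := by
    rw [← hT, ← card_erase_add_one hk]; push_cast; ring
  have hfactor (ℓ : Fin s) :
      (Nat.card {w : Fin d → Fin (M ℓ) // AliasesWithin I k (M ℓ) w} : ℝ)
        ≤ c⁻¹ * (M ℓ : ℝ) ^ d := by
    simpa using natCard_aliasesWithin_le (hMp ℓ) hk (hinj ℓ) (by linarith)
      (by rw [hTerase]; linarith [hMgt ℓ])
  have hprod : Nat.card {z : (ℓ : Fin s) → Fin d → Fin (M ℓ) // ∀ ℓ, AliasesWithin I k (M ℓ) (z ℓ)}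
      = ∏ ℓ, Nat.card {w : Fin d → Fin (M ℓ) // AliasesWithin I k (M ℓ) w} := by
    rw [Nat.card_congr Equiv.subtypePiEquivPi, Nat.card_pi]
  calc _ = ∏ ℓ, (Nat.card {w : Fin d → Fin (M ℓ) // AliasesWithin I k (M ℓ) w} : ℝ) := by
        exact_mod_cast hprod
    _ ≤ ∏ ℓ, c⁻¹ * (M ℓ : ℝ) ^ d := prod_le_prod (fun _ _ => by positivity) fun ℓ _ => hfactor ℓ
    _ = c⁻¹ ^ s * ∏ ℓ, (M ℓ : ℝ) ^ d := by rw [prod_mul_distrib, prod_const, card_fin]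
    _ ≤ δ / T * ∏ ℓ, (M ℓ : ℝ) ^ d := by
        gcongr
        refine inv_pow_le_div_of_sq_mul_log_le hδ0 ?_ hc hs
        linarith [hTerase, (#(I.erase k)).cast_nonneg (α := ℝ)]

/-- Theorem 3.2 of the paper: let `I ⊂ ℤ^d`, `|I| = T ≥ 2`, fix `k ∈ I`,
let `δ ∈ (0,1)`, `c > 1`, `λ ≥ c(T-1)`, and `s ≥ (c/(c-1))² (ln T - ln δ)/2`.
Let `M_1,…,M_s` be primes `> λ` (not necessarily distinct) such that `h ↦ h mod M_ℓ`
is injective on `I`. If `z_1,…,z_s` are independent, uniformly distributed on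
`{0,…,M_ℓ-1}^d`, then the probability that `k` aliases to another frequency of `I`
for **every** `ℓ` is at most `δ/T`. (Probability is expressed by counting: the number of
bad tuples is at most `δ/T` times the total number `∏_ℓ M_ℓ^d` of tuples.) -/
theorem statement5 {d : ℕ} (I : Finset (Fin d → ℤ)) (T : ℕ) (hT : I.card = T) (hT2 : 2 ≤ T)
    (k : Fin d → ℤ) (hk : k ∈ I)
    (δ c lam : ℝ) (hδ0 : 0 < δ) (hδ1 : δ < 1) (hc : 1 < c)
    (hlam : c * ((T : ℝ) - 1) ≤ lam)
    (s : ℕ) (hs : (c / (c - 1)) ^ 2 * (Real.log T - Real.log δ) / 2 ≤ s)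
    (M : Fin s → ℕ) (hMp : ∀ ℓ, (M ℓ).Prime) (hMgt : ∀ ℓ, lam < M ℓ)
    (hinj : ∀ ℓ, Set.InjOn (fun h : Fin d → ℤ => fun i => h i % (M ℓ : ℤ))
      (↑I : Set (Fin d → ℤ))) :
    (Nat.card {z : (ℓ : Fin s) → Fin d → Fin (M ℓ) //
        ∀ ℓ, ∃ h ∈ I, h ≠ k ∧
          (∑ i, k i * ((z ℓ i : ℕ) : ℤ)) % (M ℓ : ℤ)
            = (∑ i, h i * ((z ℓ i : ℕ) : ℤ)) % (M ℓ : ℤ)} : ℝ)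
      ≤ δ / T * ∏ ℓ, (M ℓ : ℝ) ^ d :=
  statement5_general I T hT k hk δ c lam hδ0 hδ1 hc hlam s hs M hMp hMgt hinj
end

section
/- Let I ⊂ ℤ^d be a finite frequency set and let z_1,…,z_s ∈ ℤ^d and M_1,…,M_s ∈ ℕ with M_ℓ ≥ 1. Suppose that for every k ∈ I there exists ℓ ∈ {1,…,s} such that k·z_ℓ ≢ h·z_ℓ (mod M_ℓ) for all h ∈ I∖{k}. Then the Fourier matrix A(Λ(z_1,M_1,…,z_s,M_s), I) has full column rank |I|; equivalently, the only vector (p̂_k)_{k∈I} ∈ ℂ^I with Σ_{k∈I} p̂_k e^{2πi (j/M_ℓ) k·z_ℓ} = 0 for all ℓ ∈ {1,…,s} and all j ∈ {0,…,M_ℓ−1} is the zero vector, so every trigonometric polynomial p ∈ Π_I is uniquely determined by its samples on ⋃_ℓ Λ(z_ℓ,M_ℓ). -/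
open scoped BigOperators

/-!
For a single rank-1 lattice `Λ(z, n)` the columns of the Fourier matrix `A` are characters of
`ℤ/n` evaluated along the lattice, so by orthogonality `(Aᴴ A)_{k k'}` is `n` if
`k·z ≡ k'·z (mod n)` and `0` otherwise. Thus `A v = 0` forces the sum of `v_{k'}` over the
frequencies `k'` aliasing with `k` to vanish; on a lattice where `k` has no alias this sum is `v_k`.
-/

/-- The Fourier matrix of the multiple rank-1 lattice `Λ(z_1,M_1,…,z_s,M_s)` with respect to
the frequency set `I`: the row indexed by `(ℓ, j)` and the column indexed by `k ∈ I` carry the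
entry `e^{2πi (j/M_ℓ) k·z_ℓ}`. (The rows `j = 0` of the blocks `ℓ ≥ 2` are all-ones rows and
coincide with the row `(1, 0)`, so this matrix has the same rows — up to repetition — and in
particular the same column rank as the matrix obtained by stacking the block
`j = 0,…,M_1-1` and the blocks `j = 1,…,M_ℓ-1`, `ℓ ≥ 2`.) -/
noncomputable def multiFourier {d s : ℕ} (z : Fin s → Fin d → ℤ) (M : Fin s → ℕ)
    (I : Finset (Fin d → ℤ)) :
    Matrix ((ℓ : Fin s) × Fin (M ℓ)) {k // k ∈ I} ℂ :=
  fun r k => Complex.exp (2 * Real.pi * Complex.I * (((r.2 : ℕ) : ℂ) / (M r.1 : ℂ)) *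
    ((∑ i, k.1 i * z r.1 i : ℤ) : ℂ))

open Matrix ZMod

section Rank1Lattice

variable {ι : Type*} (n : ℕ) (c : ι → ℤ)

/-- The Fourier matrix of `Λ(z, n)`, with `c k` standing for `k·z`. -/
noncomputable def rank1Fourier : Matrix (Fin n) ι ℂ :=
  fun j k => Complex.exp (2 * Real.pi * Complex.I * (((j : ℕ) : ℂ) / (n : ℂ)) * (c k : ℂ))

lemma rank1Fourier_apply [NeZero n] (j : Fin n) (k : ι) :
    rank1Fourier n c j k = stdAddChar ((j : ℕ) * c k : ZMod n) := by
  rw [show ((j : ℕ) * c k : ZMod n) = (((j : ℕ) * c k : ℤ) : ZMod n) by push_cast; rfl,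
    stdAddChar_coe, rank1Fourier]
  push_cast
  ring_nf

lemma sum_fin_stdAddChar_natCast_mul [NeZero n] (b : ZMod n) :
    ∑ j : Fin n, stdAddChar ((j : ℕ) * b : ZMod n) = if b = 0 then (n : ℂ) else 0 := by
  have hbij : Function.Bijective (fun j : Fin n => ((j : ℕ) : ZMod n)) := by
    refine (Fintype.bijective_iff_injective_and_card _).2 ⟨fun i j hij => ?_, by simp⟩
    rw [ZMod.natCast_eq_natCast_iff', Nat.mod_eq_of_lt i.2, Nat.mod_eq_of_lt j.2] at hij
    exact Fin.ext hij
  rw [Function.Bijective.sum_comp hbij (fun x => stdAddChar (x * b)),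
    AddChar.sum_mulShift b (isPrimitive_stdAddChar n), ZMod.card]
  split_ifs <;> simp

lemma conjTranspose_rank1Fourier_mul_self [Fintype ι] [NeZero n] :
    (rank1Fourier n c)ᴴ * rank1Fourier n c
      = of fun k k' => if (c k : ZMod n) = c k' then (n : ℂ) else 0 := by
  ext k k'
  have hterm : ∀ j : Fin n, star (rank1Fourier n c j k) * rank1Fourier n c j k'
      = stdAddChar (((j : ℕ) : ZMod n) * ((c k' - c k : ℤ) : ZMod n)) := by
    intro j
    rw [rank1Fourier_apply, rank1Fourier_apply, Complex.star_def, ← AddChar.map_neg_eq_conj,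
      ← AddChar.map_add_eq_mul]
    push_cast
    ring_nf
  simp only [mul_apply, conjTranspose_apply, hterm, sum_fin_stdAddChar_natCast_mul, of_apply,
    Int.cast_sub, sub_eq_zero, eq_comm]

lemma eq_zero_of_rank1Fourier_mulVec_eq_zero [Fintype ι] [NeZero n] {v : ι → ℂ}
    (hv : rank1Fourier n c *ᵥ v = 0) {k : ι} (hk : ∀ k', k' ≠ k → (c k : ZMod n) ≠ c k') :
    v k = 0 := by
  have h := congrFun (congrArg ((rank1Fourier n c)ᴴ *ᵥ ·) hv) k
  simp only [mulVec_mulVec, conjTranspose_rank1Fourier_mul_self, mulVec_zero] at h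
  rw [mulVec, dotProduct, Finset.sum_eq_single k (fun k' _ hk' => by simp [hk k' hk'])
    (by simp)] at h
  simpa [NeZero.ne n] using h

end Rank1Lattice

lemma Matrix.rank_eq_card_of_mulVec_eq_zero {m n K : Type*} [Fintype n] [Field K]
    {A : Matrix m n K} (hA : ∀ v, A *ᵥ v = 0 → v = 0) : A.rank = Fintype.card n := by
  have : Function.Injective A.mulVecLin := by
    rw [← LinearMap.ker_eq_bot, LinearMap.ker_eq_bot']
    exact hA
  rw [rank, LinearMap.finrank_range_of_inj this, Module.finrank_fintype_fun_eq_card]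

/-- if for every `k ∈ I` there is some `ℓ` such that `k` does not alias to any
other frequency of `I` modulo `M_ℓ` (i.e. `k·z_ℓ ≢ h·z_ℓ (mod M_ℓ)` for all `h ∈ I∖{k}`),
then the Fourier matrix of the multiple rank-1 lattice has full column rank `|I|`;
equivalently, the only coefficient vector `(p̂_k)_{k∈I}` all of whose lattice samples
`Σ_k p̂_k e^{2πi (j/M_ℓ) k·z_ℓ}` vanish is the zero vector, so every `p ∈ Π_I` is uniquely
determined by its samples on `⋃_ℓ Λ(z_ℓ, M_ℓ)`. -/
theorem statement7 {d s : ℕ} (I : Finset (Fin d → ℤ)) (z : Fin s → Fin d → ℤ)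
    (M : Fin s → ℕ) (hM : ∀ ℓ, 1 ≤ M ℓ)
    (hcov : ∀ k ∈ I, ∃ ℓ, ∀ h ∈ I, h ≠ k →
        (∑ i, k i * z ℓ i) % (M ℓ : ℤ) ≠ (∑ i, h i * z ℓ i) % (M ℓ : ℤ)) :
    (multiFourier z M I).rank = I.card
    ∧ ∀ v : {k // k ∈ I} → ℂ, (multiFourier z M I).mulVec v = 0 → v = 0 := by
  have hinj : ∀ v : {k // k ∈ I} → ℂ, multiFourier z M I *ᵥ v = 0 → v = 0 := by
    intro v hv
    funext k
    obtain ⟨ℓ, hℓ⟩ := hcov k.1 k.2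
    have : NeZero (M ℓ) := NeZero.of_pos (hM ℓ)
    refine eq_zero_of_rank1Fourier_mulVec_eq_zero (M ℓ)
      (fun k : {k // k ∈ I} => ∑ i, k.1 i * z ℓ i)
      (funext fun j => congrFun hv ⟨ℓ, j⟩) fun k' hk' => ?_
    rw [Ne, ZMod.intCast_eq_intCast_iff']
    exact hℓ k'.1 k'.2 (Subtype.coe_ne_coe.2 hk')
  exact ⟨by rw [rank_eq_card_of_mulVec_eq_zero hinj, Fintype.card_coe], hinj⟩
end

section
/- Let I ⊂ ℤ^d be a finite frequency set with T := |I| ≥ 4 whose expansion satisfies N_I ≤ 2(T−1) (i.e. I is contained in a d-dimensional box of edge length 2(T−1)). Then there exist a natural number s ≥ 1, a prime number M with 2(T−1) < M ≤ 4(T−1), and generating vectors z_1,…,z_s ∈ {0,…,M−1}^d ∩ ℤ^d such that the Fourier matrix A(Λ(z_1,M,…,z_s,M), I) has full column rank T (so the multiple rank-1 lattice is reconstructing for I) and the total number of sampling nodes satisfies |⋃_{ℓ=1}^s Λ(z_ℓ,M)| ≤ 1 + s(M−1) ≤ 10 · T · ln T. -/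
/-!
If the lattice `z_ℓ` separates a frequency `k` from the rest of `I` modulo `M`, i.e.
`k·z_ℓ ≢ l·z_ℓ (mod M)` for all `l ≠ k`, then pairing the rows of block `ℓ` with the conjugate
character of `k` isolates column `k` (orthogonality of `M`-th roots of unity); so if every `k` is
separated by some block, the Fourier matrix has a left inverse and full column rank.
Since `M > N_I`, the frequencies stay distinct modulo `M`, and for fixed `k` a nonzero linear form
vanishes on a fraction `1/M` of `(ℤ/M)^d`. Hence `k` fails to be separated by `s` random vectors
with probability at most `((T-1)/M)^s < 2^{-s}`, and a union bound over the `T` frequencies with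
`s = ⌊log₂ T⌋ + 1` leaves a good choice. Bertrand's postulate supplies the prime `M`.
-/

open scoped BigOperators

open Finset

theorem sum_fin_exp_eq_ite (M : ℕ) [NeZero M] (a : ℤ) :
    ∑ j : Fin M, Complex.exp (2 * Real.pi * Complex.I * (((j : ℕ) : ℂ) / M) * a) =
      if (a : ZMod M) = 0 then (M : ℂ) else 0 := by
  have hterm (j : Fin M) : Complex.exp (2 * Real.pi * Complex.I * (((j : ℕ) : ℂ) / M) * a) =
      ZMod.stdAddChar (((j : ℕ) : ZMod M) * (a : ZMod M)) := by
    rw [← Int.cast_natCast (R := ZMod M), ← Int.cast_mul, ZMod.stdAddChar_coe]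
    push_cast
    ring_nf
  have hbij : Function.Bijective fun j : Fin M => ((j : ℕ) : ZMod M) := by
    refine (Fintype.bijective_iff_injective_and_card _).mpr ⟨fun i j hij => Fin.ext ?_, by simp⟩
    simpa [ZMod.val_natCast, Nat.mod_eq_of_lt i.isLt, Nat.mod_eq_of_lt j.isLt] using
      congrArg ZMod.val hij
  rw [Fintype.sum_congr _ _ hterm, Fintype.sum_bijective _ hbij _
    (fun x => ZMod.stdAddChar (x * (a : ZMod M))) (fun _ => rfl),
    AddChar.sum_mulShift _ (ZMod.isPrimitive_stdAddChar M), ZMod.card, Nat.cast_ite, Nat.cast_zero]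

theorem Matrix.rank_eq_card_of_mul_eq_one {m n R : Type*} [Fintype m] [Fintype n] [DecidableEq n]
    [CommRing R] [StrongRankCondition R] {A : Matrix m n R} {B : Matrix n m R} (h : B * A = 1) :
    A.rank = Fintype.card n :=
  le_antisymm A.rank_le_card_width (by simpa [h] using Matrix.rank_mul_le_right B A)

theorem multiFourier_rank_eq_card {d s : ℕ} (z : Fin s → Fin d → ℤ) (M : Fin s → ℕ)
    (hM : ∀ ℓ, M ℓ ≠ 0) (I : Finset (Fin d → ℤ))
    (hsep : ∀ k ∈ I, ∃ ℓ, ∀ l ∈ I, l ≠ k →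
      ((∑ i, k i * z ℓ i : ℤ) : ZMod (M ℓ)) ≠ ((∑ i, l i * z ℓ i : ℤ) : ZMod (M ℓ))) :
    (multiFourier z M I).rank = I.card := by
  classical
  choose ℓ hℓ using fun k : {k // k ∈ I} => hsep k.1 k.2
  set a : Fin s → (Fin d → ℤ) → ℤ := fun ℓ k => ∑ i, k i * z ℓ i
  let B : Matrix {k // k ∈ I} ((ℓ : Fin s) × Fin (M ℓ)) ℂ := fun k₀ r =>
    if r.1 = ℓ k₀ then
      Complex.exp (-(2 * Real.pi * Complex.I * (((r.2 : ℕ) : ℂ) / (M r.1 : ℂ)) *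
        (a r.1 k₀.1 : ℂ))) / M r.1
    else 0
  suffices B * multiFourier z M I = 1 by
    rw [Matrix.rank_eq_card_of_mul_eq_one this, Fintype.card_coe]
  ext k₀ k
  have := NeZero.mk (hM (ℓ k₀))
  have hentry (j : Fin (M (ℓ k₀))) : B k₀ ⟨ℓ k₀, j⟩ * multiFourier z M I ⟨ℓ k₀, j⟩ k =
      Complex.exp (2 * Real.pi * Complex.I * (((j : ℕ) : ℂ) / M (ℓ k₀)) *
        (a (ℓ k₀) k - a (ℓ k₀) k₀ : ℤ)) / M (ℓ k₀) := by
    simp only [B, multiFourier, a, if_pos rfl, div_mul_eq_mul_div, ← Complex.exp_add]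
    push_cast
    ring_nf
  have hM₀ : (M (ℓ k₀) : ℂ) ≠ 0 := Nat.cast_ne_zero.mpr (hM _)
  rw [Matrix.mul_apply, Fintype.sum_sigma,
    Fintype.sum_eq_single (ℓ k₀) fun x hx => sum_eq_zero fun y _ => by simp [B, hx],
    Fintype.sum_congr _ _ hentry, ← sum_div, sum_fin_exp_eq_ite, Matrix.one_apply]
  by_cases hk : k = k₀
  · simp [hk, hM₀]
  · have hne := hℓ k₀ k.1 k.2 (Subtype.coe_ne_coe.mpr hk)
    rw [if_neg (Ne.symm hk), if_neg, zero_div]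
    rwa [Int.cast_sub, sub_eq_zero, eq_comm]

section Counting

variable {K ι : Type*} [Field K] [Fintype K] [DecidableEq K] [Fintype ι] [DecidableEq ι]

theorem card_filter_dotProduct_eq_zero_mul_le {a : ι → K} (ha : a ≠ 0) :
    #{v | a ⬝ᵥ v = 0} * Fintype.card K ≤ Fintype.card K ^ Fintype.card ι := by
  obtain ⟨i₀, hi₀⟩ := Function.ne_iff.mp ha
  set S : Finset ((ι → K) × K) := ({v | a ⬝ᵥ v = 0} : Finset (ι → K)) ×ˢ (univ : Finset K)
  have hinj : Set.InjOn (fun p : (ι → K) × K => p.1 + p.2 • Pi.single i₀ 1) S := by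
    rintro ⟨v, t⟩ hv ⟨v', t'⟩ hv' h
    simp only [S, mem_coe, mem_product, mem_filter, mem_univ, true_and, and_true] at hv hv'
    have ht : t = t' := by
      have := congrArg (a ⬝ᵥ ·) h
      simp only [dotProduct_add, dotProduct_smul, dotProduct_single, hv, hv', zero_add,
        mul_one, smul_eq_mul] at this
      exact mul_right_cancel₀ hi₀ this
    subst ht
    simp only [Prod.mk.injEq, and_true]
    exact add_right_cancel h
  simpa [S, card_product] using card_le_card_of_injOn _ (fun _ _ => mem_univ _) hinj

theorem card_filter_exists_dotProduct_eq_mul_le (J : Finset (ι → K)) (k : ι → K) :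
    #{v | ∃ l ∈ J, l ≠ k ∧ k ⬝ᵥ v = l ⬝ᵥ v} * Fintype.card K ≤
      #(J.erase k) * Fintype.card K ^ Fintype.card ι := by
  have hsub : ({v | ∃ l ∈ J, l ≠ k ∧ k ⬝ᵥ v = l ⬝ᵥ v} : Finset (ι → K)) ⊆
      (J.erase k).biUnion fun l => {v | (k - l) ⬝ᵥ v = 0} := by
    intro v hv
    obtain ⟨l, hl, hlk, hkl⟩ := (mem_filter.mp hv).2
    exact mem_biUnion.mpr ⟨l, mem_erase.mpr ⟨hlk, hl⟩,
      mem_filter.mpr ⟨mem_univ _, by rw [sub_dotProduct, hkl, sub_self]⟩⟩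
  calc _ ≤ (∑ l ∈ J.erase k, #{v | (k - l) ⬝ᵥ v = 0}) * Fintype.card K :=
        Nat.mul_le_mul_right _ ((card_le_card hsub).trans card_biUnion_le)
    _ ≤ ∑ l ∈ J.erase k, Fintype.card K ^ Fintype.card ι := by
        rw [sum_mul]
        refine sum_le_sum fun l hl => card_filter_dotProduct_eq_zero_mul_le ?_
        exact sub_ne_zero.mpr (ne_of_mem_erase hl).symm
    _ = _ := by rw [sum_const, smul_eq_mul]

theorem exists_forall_exists_dotProduct_ne (J : Finset (ι → K)) (s : ℕ)
    (hJ : #J * (#J - 1) ^ s < Fintype.card K ^ s) :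
    ∃ w : Fin s → ι → K, ∀ k ∈ J, ∃ ℓ, ∀ l ∈ J, l ≠ k → k ⬝ᵥ w ℓ ≠ l ⬝ᵥ w ℓ := by
  set q := Fintype.card K
  set n := Fintype.card ι
  let bad (k : ι → K) : Finset (ι → K) := {v | ∃ l ∈ J, l ≠ k ∧ k ⬝ᵥ v = l ⬝ᵥ v}
  by_contra! hall
  have hcover : (univ : Finset (Fin s → ι → K)) ⊆
      J.biUnion fun k => Fintype.piFinset fun _ => bad k := by
    intro w _
    obtain ⟨k, hk, hw⟩ := hall w
    exact mem_biUnion.mpr ⟨k, hk, Fintype.mem_piFinset.mpr fun ℓ => by simpa [bad] using hw ℓ⟩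
  have hbad (k) (hk : k ∈ J) : (#(bad k) * q) ^ s ≤ ((#J - 1) * q ^ n) ^ s := by
    refine Nat.pow_le_pow_left ?_ s
    simpa [card_erase_of_mem hk] using card_filter_exists_dotProduct_eq_mul_le J k
  have : (q ^ n) ^ s * q ^ s < (q ^ n) ^ s * q ^ s := calc
    (q ^ n) ^ s * q ^ s ≤ (∑ k ∈ J, #(bad k) ^ s) * q ^ s := by
        gcongr
        simpa [Fintype.card_piFinset, Fintype.card_pi, q, n] using
          (card_le_card hcover).trans card_biUnion_le
    _ ≤ ∑ k ∈ J, ((#J - 1) * q ^ n) ^ s := by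
        rw [sum_mul]
        exact sum_le_sum fun k hk => (mul_pow _ _ _).symm.le.trans (hbad k hk)
    _ = (q ^ n) ^ s * (#J * (#J - 1) ^ s) := by rw [sum_const, smul_eq_mul]; ring
    _ < (q ^ n) ^ s * q ^ s := by
        have : 0 < q := Fintype.card_pos
        gcongr
  exact lt_irrefl _ this

end Counting

theorem card_image_univ_le_of_apply_mk_eq {α β γ : Type*} [Fintype α] [Fintype β] [DecidableEq β]
    [DecidableEq γ] (f : α × β → γ) (b₀ : β) (c : γ) (hf : ∀ a, f (a, b₀) = c) :
    #(univ.image f) ≤ 1 + Fintype.card α * (Fintype.card β - 1) := by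
  have hsub : univ.image f ⊆ insert c ((univ ×ˢ univ.erase b₀).image f) := by
    rintro _ hx
    obtain ⟨⟨a, b⟩, -, rfl⟩ := mem_image.mp hx
    by_cases hb : b = b₀
    · simp [hb, hf]
    · exact mem_insert_of_mem (mem_image_of_mem f (by simp [hb]))
  calc _ ≤ #((univ ×ˢ univ.erase b₀).image f) + 1 :=
        (card_le_card hsub).trans (card_insert_le _ _)
    _ ≤ #(univ ×ˢ univ.erase b₀) + 1 := by gcongr; exact card_image_le
    _ = _ := by rw [card_product, card_erase_of_mem (mem_univ _), card_univ, card_univ, add_comm]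

theorem card_rank1LatticeNodes_le {d s M : ℕ} (z : Fin s → Fin d → ℤ) :
    #(univ.image fun r : Fin s × Fin M =>
        fun i => Int.fract (((r.2 : ℕ) : ℝ) / (M : ℝ) * (z r.1 i : ℝ))) ≤ 1 + s * (M - 1) := by
  cases M with
  | zero => simp
  | succ M =>
    simpa using card_image_univ_le_of_apply_mk_eq (α := Fin s) (β := Fin (M + 1))
      (fun r i => Int.fract (((r.2 : ℕ) : ℝ) / ((M + 1 : ℕ) : ℝ) * (z r.1 i : ℝ))) 0 0
      fun ℓ => by ext; simp

theorem Int.eq_of_intCast_eq_of_abs_sub_lt {a b : ℤ} {M : ℕ} (h : (a : ZMod M) = b)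
    (hab : |a - b| < M) : a = b := by
  rw [ZMod.intCast_eq_intCast_iff_dvd_sub] at h
  rw [abs_sub_comm] at hab
  exact (sub_eq_zero.mp (Int.eq_zero_of_abs_lt_dvd h hab)).symm

theorem one_add_natLog_mul_le_ten_mul_log {T M : ℕ} (hT : 4 ≤ T) (hM : M ≤ 4 * (T - 1)) :
    (1 : ℝ) + (Nat.log 2 T + 1 : ℕ) * ((M : ℝ) - 1) ≤ 10 * T * Real.log T := by
  set s : ℕ := Nat.log 2 T + 1
  set L := Real.log T
  have hT' : (4 : ℝ) ≤ T := by exact_mod_cast hT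
  have hlog_pow : ((Nat.log 2 T : ℕ) : ℝ) * Real.log 2 ≤ L := by
    rw [← Real.log_pow]
    exact Real.log_le_log (by positivity) (by exact_mod_cast Nat.pow_log_le_self 2 (by omega))
  have hlog_four : 2 * Real.log 2 ≤ L := by
    rw [← Real.log_rpow two_pos]
    exact Real.log_le_log (by positivity) (by norm_num; exact_mod_cast hT)
  have hlog_two : 0.6931 < Real.log 2 := Real.log_two_gt_d9.trans' (by norm_num)
  have hs : (s : ℝ) * Real.log 2 ≤ 3 / 2 * L := by
    simp only [s, Nat.cast_add, Nat.cast_one]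
    linarith
  have hs' : (s : ℝ) ≤ 2.17 * L := by nlinarith
  have hM' : (M : ℝ) - 1 ≤ 4 * T := by
    have : (M : ℝ) ≤ 4 * T := by exact_mod_cast hM.trans (by omega)
    linarith
  nlinarith [s.cast_nonneg (α := ℝ)]

/-- for every finite `I ⊂ ℤ^d` with `T = |I| ≥ 4` and expansion
`N_I ≤ 2(T-1)` there exist `s ≥ 1`, a prime `M` with `2(T-1) < M ≤ 4(T-1)` and generating
vectors `z_1,…,z_s ∈ {0,…,M-1}^d` such that the multiple rank-1 lattice
`Λ(z_1,M,…,z_s,M)` is reconstructing for `I` (its Fourier matrix has full column rank `T`)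
and the total number of sampling nodes satisfies
`|⋃_ℓ Λ(z_ℓ,M)| ≤ 1 + s(M-1) ≤ 10·T·ln T`. -/
theorem statement9 {d : ℕ} (I : Finset (Fin d → ℤ)) (T : ℕ) (hT : I.card = T) (hT4 : 4 ≤ T)
    (hNI : ∀ k ∈ I, ∀ l ∈ I, ∀ j, k j - l j ≤ 2 * ((T : ℤ) - 1)) :
    ∃ (s M : ℕ) (z : Fin s → Fin d → ℤ),
      1 ≤ s ∧ M.Prime ∧ 2 * (T - 1) < M ∧ M ≤ 4 * (T - 1) ∧
      (∀ ℓ i, 0 ≤ z ℓ i ∧ z ℓ i ≤ (M : ℤ) - 1) ∧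
      (multiFourier z (fun _ => M) I).rank = T ∧
      (Finset.image (fun r : Fin s × Fin M =>
          fun i => Int.fract (((r.2 : ℕ) : ℝ) / (M : ℝ) * (z r.1 i : ℝ))) Finset.univ).card
        ≤ 1 + s * (M - 1) ∧
      ((1 : ℝ) + s * ((M : ℝ) - 1)) ≤ 10 * T * Real.log T := by
  classical
  obtain ⟨M, hMp, hMgt, hMle⟩ := Nat.exists_prime_lt_and_le_two_mul (2 * (T - 1)) (by omega)
  have := Fact.mk hMp
  set s := Nat.log 2 T + 1
  have hMgt' : 2 * ((T : ℤ) - 1) < M := by omega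
  let red : (Fin d → ℤ) → Fin d → ZMod M := fun k i => k i
  have hred : Set.InjOn red I := fun k hk l hl hkl => funext fun i =>
    Int.eq_of_intCast_eq_of_abs_sub_lt (congrFun hkl i) <| abs_sub_lt_iff.mpr
      ⟨by linarith [hNI k hk l hl i], by linarith [hNI l hl k hk i]⟩
  have hcount : T * (T - 1) ^ s < M ^ s := calc
    T * (T - 1) ^ s < 2 ^ s * (T - 1) ^ s :=
      Nat.mul_lt_mul_of_pos_right (Nat.lt_pow_succ_log_self one_lt_two T) (pow_pos (by omega) s)
    _ = (2 * (T - 1)) ^ s := (mul_pow _ _ _).symm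
    _ < M ^ s := Nat.pow_lt_pow_left hMgt (Nat.add_one_ne_zero _)
  obtain ⟨w, hw⟩ := exists_forall_exists_dotProduct_ne (I.image red) s
    (by rwa [card_image_of_injOn hred, hT, ZMod.card])
  set z : Fin s → Fin d → ℤ := fun ℓ i => (w ℓ i).val
  have hz (k : Fin d → ℤ) (ℓ) : ((∑ i, k i * z ℓ i : ℤ) : ZMod M) = red k ⬝ᵥ w ℓ := by
    simp [z, red, dotProduct]
  refine ⟨s, M, z, by omega, hMp, hMgt, by omega,
    fun ℓ i => ⟨Int.natCast_nonneg _, by have := (w ℓ i).val_lt; simp only [z]; omega⟩, ?_,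
    card_rank1LatticeNodes_le z, one_add_natLog_mul_le_ten_mul_log hT4 (by omega)⟩
  rw [multiFourier_rank_eq_card z _ (fun _ => hMp.ne_zero), hT]
  intro k hk
  obtain ⟨ℓ, hℓ⟩ := hw (red k) (mem_image_of_mem red hk)
  refine ⟨ℓ, fun l hl hlk => ?_⟩
  rw [hz, hz]
  exact hℓ (red l) (mem_image_of_mem red hl) (hred.ne hl hk hlk)
end

section
/- Let I ⊂ ℤ^d be a finite frequency set with T := |I| ≥ 2 and expansion N_I, let T₁ ≥ T be an integer, let δ ∈ (0,1) and c > 1, let λ ≥ max{c(T−1), N_I}, let s be an integer with s ≥ (c/(c−1))² (ln T + ln T₁ − ln δ)/2, and let M be a prime with M > λ. If z_1,…,z_s are independent random vectors, each uniformly distributed on {0,…,M−1}^d ∩ ℤ^d, then with probability at least 1 − δ/T₁ there exists ℓ ∈ {1,…,s} such that the set I_ℓ := {k ∈ I : k·z_ℓ ≢ h·z_ℓ (mod M) for all h ∈ I∖{k}} satisfies |I_ℓ| ≥ T/s; that is, the best of the s random generating vectors allows the unique reconstruction of at least T/s of the Fourier coefficients of every p ∈ Π_I from samples on the single rank-1 lattice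 Λ(z_ℓ, M). -/
/-!
For k ∈ I and h ≠ k, some coordinate of h - k is nonzero and smaller than the prime M in
absolute value, so `k·z ≡ h·z (mod M)` is a nontrivial linear congruence with only `M^(d-1)`
solutions among the `M^d` vectors z. Double counting shows that a random z aliases on average at
most `T(T-1)/M ≤ T/c` frequencies, so by Markov's inequality z is bad (fewer than `T/s`
non-aliasing frequencies) with probability `p ≤ (T-1)/M · T/(T - (T-1)/s)`. By independence all
s vectors are bad with probability `p^s ≤ T c^(-s)` (Bernoulli's inequality), and the choice of s
gives `c^s ≥ T T₁/δ` because `log c ≥ 2((c-1)/c)^2`.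
-/

open Finset

lemma pow_le_mul_sub_div_pow {T : ℝ} (hT : 1 ≤ T) (s : ℕ) :
    T ^ s ≤ T * (T - (T - 1) / s) ^ s := by
  rcases s.eq_zero_or_pos with rfl | hs
  · simpa using hT
  have hs' : (1 : ℝ) ≤ s := by exact_mod_cast hs
  have hT0 : 0 < T := by linarith
  have hx : (T - 1) / (T * s) ≤ 1 := by
    rw [div_le_one (by positivity)]
    nlinarith
  have hbern := one_add_mul_le_pow (a := -((T - 1) / (T * s))) (by linarith) s
  have hlow : 1 + s * -((T - 1) / (T * s)) = T⁻¹ := by field_simp; ring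
  have hbase : T * (1 + -((T - 1) / (T * s))) = T - (T - 1) / s := by field_simp; ring
  calc T ^ s = T * (T ^ s * T⁻¹) := by field_simp
    _ ≤ T * (T ^ s * (1 + -((T - 1) / (T * s))) ^ s) := by
        rw [hlow] at hbern; gcongr
    _ = T * (T - (T - 1) / s) ^ s := by rw [← mul_pow, hbase]

section LinearCongruence

variable {ι : Type*} [Fintype ι] [DecidableEq ι] {M : ℕ}

lemma eq_of_dvd_sum_mul_of_forall_ne (hM : M.Prime) {a : ι → ℤ} {j : ι} (hj : ¬ (M : ℤ) ∣ a j)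
    {z w : ι → Fin M} (hz : (M : ℤ) ∣ ∑ i, a i * ((z i : ℕ) : ℤ))
    (hw : (M : ℤ) ∣ ∑ i, a i * ((w i : ℕ) : ℤ)) (hzw : ∀ i, i ≠ j → z i = w i) : z = w := by
  have hsub : ∑ i, a i * ((w i : ℕ) : ℤ) - ∑ i, a i * ((z i : ℕ) : ℤ)
      = a j * (((w j : ℕ) : ℤ) - ((z j : ℕ) : ℤ)) := by
    rw [← sum_sub_distrib, sum_eq_single j (fun i _ hi => by rw [hzw i hi]; ring) (by simp)]
    ring
  have hdvd : (M : ℤ) ∣ ((w j : ℕ) : ℤ) - ((z j : ℕ) : ℤ) :=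
    ((Nat.prime_iff_prime_int.mp hM).dvd_or_dvd (hsub ▸ dvd_sub hw hz)).resolve_left hj
  have hj_eq : z j = w j :=
    Fin.ext ((Nat.modEq_iff_dvd.mpr hdvd).eq_of_lt_of_lt (z j).isLt (w j).isLt)
  funext i
  by_cases hi : i = j
  · exact hi ▸ hj_eq
  · exact hzw i hi

lemma card_filter_dvd_sum_mul_mul_le (hM : M.Prime) (a : ι → ℤ) {j : ι} (hj : ¬ (M : ℤ) ∣ a j) :
    #{z : ι → Fin M | (M : ℤ) ∣ ∑ i, a i * ((z i : ℕ) : ℤ)} * M ≤ M ^ Fintype.card ι := by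
  set S := ({z : ι → Fin M | (M : ℤ) ∣ ∑ i, a i * ((z i : ℕ) : ℤ)} : Finset _)
  -- a solution is determined by its coordinates off `j`, so overwriting `z j` is injective
  have hinj : (↑(S ×ˢ (univ : Finset (Fin M))) : Set ((ι → Fin M) × Fin M)).InjOn
      fun p => Function.update p.1 j p.2 := by
    rintro ⟨z, t⟩ hz ⟨w, u⟩ hw hzw
    simp only [coe_product, mem_coe, mem_filter, S, Set.mem_prod] at hz hw
    have ht : t = u := by simpa using congrFun hzw j
    refine Prod.ext (eq_of_dvd_sum_mul_of_forall_ne hM hj hz.1.2 hw.1.2 fun i hi => ?_) ht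
    simpa [Function.update_of_ne hi] using congrFun hzw i
  simpa [S, card_product] using card_le_card_of_injOn _ (fun _ _ => mem_coe.2 (mem_univ _)) hinj

end LinearCongruence

section Aliasing

variable {d : ℕ} (I : Finset (Fin d → ℤ)) (M : ℕ)

def nonAliasing (z : Fin d → Fin M) : Finset (Fin d → ℤ) :=
  I.filter fun k => ∀ h ∈ I, h ≠ k →
    (∑ i, k i * ((z i : ℕ) : ℤ)) % (M : ℤ) ≠ (∑ i, h i * ((z i : ℕ) : ℤ)) % (M : ℤ)

variable {I M}

lemma nonAliasing_subset (z : Fin d → Fin M) : nonAliasing I M z ⊆ I := filter_subset _ _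

lemma exists_dvd_of_notMem_nonAliasing {k : Fin d → ℤ} (hk : k ∈ I) {z : Fin d → Fin M}
    (hz : k ∉ nonAliasing I M z) :
    ∃ h ∈ I.erase k, (M : ℤ) ∣ ∑ i, (h i - k i) * ((z i : ℕ) : ℤ) := by
  simp only [nonAliasing, mem_filter, hk, true_and, not_forall, not_not] at hz
  obtain ⟨h, hI, hne, heq⟩ := hz
  refine ⟨h, mem_erase.2 ⟨hne, hI⟩, ?_⟩
  simpa only [← sum_sub_distrib, sub_mul] using Int.ModEq.dvd heq

lemma card_filter_notMem_nonAliasing_mul_le (hM : M.Prime)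
    (hI : ∀ h ∈ I, ∀ k ∈ I, ∀ j, |h j - k j| < M) {k : Fin d → ℤ} (hk : k ∈ I) :
    #{z : Fin d → Fin M | k ∉ nonAliasing I M z} * M ≤ (#I - 1) * M ^ d := by
  have hsub : ({z : Fin d → Fin M | k ∉ nonAliasing I M z} : Finset _) ⊆
      (I.erase k).biUnion fun h => {z | (M : ℤ) ∣ ∑ i, (h i - k i) * ((z i : ℕ) : ℤ)} := by
    intro z hz
    obtain ⟨h, hh, hdvd⟩ := exists_dvd_of_notMem_nonAliasing hk (mem_filter.1 hz).2
    exact mem_biUnion.2 ⟨h, hh, mem_filter.2 ⟨mem_univ _, hdvd⟩⟩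
  have hcount : ∀ h ∈ I.erase k,
      #{z : Fin d → Fin M | (M : ℤ) ∣ ∑ i, (h i - k i) * ((z i : ℕ) : ℤ)} * M ≤ M ^ d := by
    intro h hh
    obtain ⟨hne, hhI⟩ := mem_erase.1 hh
    obtain ⟨j, hj⟩ := Function.ne_iff.1 hne
    have hndvd : ¬ (M : ℤ) ∣ h j - k j := fun hdvd =>
      hj (sub_eq_zero.1 (Int.eq_zero_of_abs_lt_dvd hdvd (hI h hhI k hk j)))
    simpa using card_filter_dvd_sum_mul_mul_le hM (fun i => h i - k i) hndvd
  calc #{z : Fin d → Fin M | k ∉ nonAliasing I M z} * M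
      ≤ (∑ h ∈ I.erase k,
          #{z : Fin d → Fin M | (M : ℤ) ∣ ∑ i, (h i - k i) * ((z i : ℕ) : ℤ)}) * M :=
        Nat.mul_le_mul_right _ ((card_le_card hsub).trans card_biUnion_le)
    _ ≤ ∑ _h ∈ I.erase k, M ^ d := by rw [sum_mul]; exact sum_le_sum hcount
    _ = (#I - 1) * M ^ d := by rw [sum_const, card_erase_of_mem hk, smul_eq_mul]

lemma sum_card_sdiff_nonAliasing_mul_le (hM : M.Prime)
    (hI : ∀ h ∈ I, ∀ k ∈ I, ∀ j, |h j - k j| < M) :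
    (∑ z : Fin d → Fin M, #(I \ nonAliasing I M z)) * M ≤ #I * (#I - 1) * M ^ d := by
  have hswap : ∑ z : Fin d → Fin M, #(I \ nonAliasing I M z)
      = ∑ k ∈ I, #{z : Fin d → Fin M | k ∉ nonAliasing I M z} := by
    simp_rw [sdiff_eq_filter]
    exact sum_card_bipartiteAbove_eq_sum_card_bipartiteBelow (fun z k => k ∉ nonAliasing I M z)
  calc (∑ z : Fin d → Fin M, #(I \ nonAliasing I M z)) * M
      = ∑ k ∈ I, #{z : Fin d → Fin M | k ∉ nonAliasing I M z} * M := by rw [hswap, sum_mul]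
    _ ≤ ∑ _k ∈ I, (#I - 1) * M ^ d :=
        sum_le_sum fun k hk => card_filter_notMem_nonAliasing_mul_le hM hI hk
    _ = #I * (#I - 1) * M ^ d := by rw [sum_const, smul_eq_mul, mul_assoc]

lemma card_nonAliasing_lt_mul_le (hM : M.Prime)
    (hI : ∀ h ∈ I, ∀ k ∈ I, ∀ j, |h j - k j| < M) {s : ℕ} (hs : 0 < s) :
    (Nat.card {z : Fin d → Fin M // ¬ (#I : ℝ) / s ≤ #(nonAliasing I M z)} : ℝ)
        * (#I - (#I - 1) / s) * M ≤ #I * (#I - 1) * M ^ d := by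
  rcases I.eq_empty_or_nonempty with rfl | hne
  · simp
  have hs' : (0 : ℝ) < s := by exact_mod_cast hs
  have hbad : ∀ z : Fin d → Fin M, ¬ (#I : ℝ) / s ≤ #(nonAliasing I M z) →
      (#I - (#I - 1) / s : ℝ) ≤ #(I \ nonAliasing I M z) := by
    intro z hz
    rw [not_le, lt_div_iff₀ hs'] at hz
    -- integrality improves `#nonAliasing < #I / s` to `≤ (#I - 1) / s`, which matters for `s = 1`
    have hlt : #(nonAliasing I M z) * s ≤ #I - 1 := Nat.le_sub_one_of_lt (by exact_mod_cast hz)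
    rw [card_sdiff_of_subset (nonAliasing_subset z),
      Nat.cast_sub (card_le_card (nonAliasing_subset z)), sub_le_sub_iff_left, le_div_iff₀ hs']
    exact_mod_cast (Nat.cast_le.2 hlt).trans_eq (Nat.cast_pred hne.card_pos)
  have hsum : (∑ z : Fin d → Fin M, (#(I \ nonAliasing I M z) : ℝ)) * M
      ≤ #I * (#I - 1) * M ^ d := by
    have := Nat.cast_le (α := ℝ) |>.2 (sum_card_sdiff_nonAliasing_mul_le hM hI)
    push_cast [Nat.cast_pred hne.card_pos] at this
    exact this
  rw [Nat.card_eq_fintype_card, Fintype.card_subtype]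
  calc (#{z : Fin d → Fin M | ¬ (#I : ℝ) / s ≤ #(nonAliasing I M z)} : ℝ)
        * (#I - (#I - 1) / s) * M
      = (∑ z ∈ {z : Fin d → Fin M | ¬ (#I : ℝ) / s ≤ #(nonAliasing I M z)},
          (#I - (#I - 1) / s : ℝ)) * M := by rw [sum_const, nsmul_eq_mul]
    _ ≤ (∑ z ∈ {z : Fin d → Fin M | ¬ (#I : ℝ) / s ≤ #(nonAliasing I M z)},
          (#(I \ nonAliasing I M z) : ℝ)) * M := by
        gcongr with z hz
        exact hbad z (mem_filter.1 hz).2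
    _ ≤ _ := by
        refine le_trans ?_ hsum
        gcongr
        exact subset_univ _

lemma card_nonAliasing_lt_pow_mul_le (hM : M.Prime)
    (hI : ∀ h ∈ I, ∀ k ∈ I, ∀ j, |h j - k j| < M) {s : ℕ} (hs : 0 < s) {c : ℝ} (hc : 0 < c)
    (hMc : c * (#I - 1) ≤ M) :
    (Nat.card {z : Fin d → Fin M // ¬ (#I : ℝ) / s ≤ #(nonAliasing I M z)} : ℝ) ^ s * c ^ s
      ≤ #I * ((M : ℝ) ^ d) ^ s := by
  rcases I.eq_empty_or_nonempty with rfl | hne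
  · simp [hs.ne']
  have hmarkov := card_nonAliasing_lt_mul_le hM hI hs
  set B : ℝ := (Nat.card {z : Fin d → Fin M // ¬ (#I : ℝ) / s ≤ #(nonAliasing I M z)} : ℝ)
  set T : ℝ := (#I : ℝ)
  set m : ℝ := T - (T - 1) / s
  have hT : 1 ≤ T := Nat.one_le_cast.2 hne.card_pos
  have hm : 0 < m := by
    have : (T - 1) / s ≤ T - 1 := div_le_self (by linarith) (by exact_mod_cast hs)
    linarith
  have hM0 : (0 : ℝ) < M := by exact_mod_cast hM.pos
  have hlin : B * c * m ≤ T * M ^ d := by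
    refine le_of_mul_le_mul_right ?_ hM0
    calc B * c * m * M = c * (B * m * M) := by ring
      _ ≤ c * (T * (T - 1) * M ^ d) := by gcongr
      _ = T * M ^ d * (c * (T - 1)) := by ring
      _ ≤ T * M ^ d * M := by gcongr
  calc B ^ s * c ^ s = (B * c * m) ^ s / m ^ s := by
        rw [mul_pow, mul_pow, mul_div_assoc, div_self (pow_ne_zero _ hm.ne'), mul_one]
    _ ≤ (T * M ^ d) ^ s / m ^ s := by gcongr
    _ = T ^ s * ((M : ℝ) ^ d) ^ s / m ^ s := by rw [mul_pow]
    _ ≤ T * m ^ s * ((M : ℝ) ^ d) ^ s / m ^ s := by gcongr; exact pow_le_mul_sub_div_pow hT s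
    _ = T * ((M : ℝ) ^ d) ^ s := by field_simp

end Aliasing

lemma two_mul_div_sq_le_log {c : ℝ} (hc : 1 ≤ c) : 2 * ((c - 1) / c) ^ 2 ≤ Real.log c := by
  have h := Real.le_log_one_add_of_nonneg (sub_nonneg.2 hc)
  rw [add_sub_cancel] at h
  refine le_trans ?_ h
  have hc0 : 0 < c := by linarith
  rw [div_pow, mul_div_assoc', div_le_div_iff₀ (by positivity) (by linarith)]
  nlinarith [sub_nonneg.2 hc]

lemma le_pow_of_mul_log_le {c x : ℝ} {s : ℕ} (hc : 1 < c) (hx : 0 < x)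
    (hs : (c / (c - 1)) ^ 2 * Real.log x / 2 ≤ s) : x ≤ c ^ s := by
  have hc0 : 0 < c := by linarith
  have hlogc := two_mul_div_sq_le_log hc.le
  rw [← Real.exp_log hx, ← Real.exp_log (pow_pos hc0 s), Real.exp_le_exp, Real.log_pow]
  rcases le_total (Real.log x) 0 with h | h
  · exact h.trans (by have := Real.log_nonneg hc.le; positivity)
  · have hc1 : c - 1 ≠ 0 := by linarith
    calc Real.log x = (c / (c - 1)) ^ 2 * Real.log x / 2 * (2 * ((c - 1) / c) ^ 2) := by
          field_simp
      _ ≤ s * Real.log c := mul_le_mul hs hlogc (by positivity) (by positivity)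

lemma card_exists_add_card_pow {ι α : Type*} [Finite ι] [Finite α] (P : α → Prop) :
    Nat.card {z : ι → α // ∃ i, P (z i)} + Nat.card {a // ¬ P a} ^ Nat.card ι
      = Nat.card α ^ Nat.card ι := by
  have hall : Nat.card {z : ι → α // ∀ i, ¬ P (z i)} = Nat.card {a // ¬ P a} ^ Nat.card ι := by
    rw [Nat.card_congr (Equiv.subtypePiEquivPi (p := fun _ a => ¬ P a)), Nat.card_fun]
  classical
  rw [← hall, ← Nat.card_fun, ← Nat.card_sum]
  simp_rw [← not_exists]
  exact Nat.card_congr (Equiv.sumCompl _)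

/-- step of Theorem 4.1: let `T = |I| ≥ 2`, `T ≤ T₁`, `δ ∈ (0,1)`, `c > 1`,
`λ ≥ max{c(T-1), N_I}`, `s ≥ (c/(c-1))² (ln T + ln T₁ - ln δ)/2`, and let `M` be a prime
`> λ`. For independent uniform `z_1,…,z_s ∈ {0,…,M-1}^d`, with probability at least
`1 - δ/T₁` there is an `ℓ` such that the set
`I_ℓ = {k ∈ I : k·z_ℓ ≢ h·z_ℓ (mod M) ∀ h ∈ I∖{k}}` of non-aliasing frequencies satisfies
`|I_ℓ| ≥ T/s`, i.e. the best of the `s` random generating vectors allows the unique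
reconstruction of at least `T/s` Fourier coefficients from samples on `Λ(z_ℓ, M)`. -/
theorem statement14 {d : ℕ} (I : Finset (Fin d → ℤ)) (T T1 : ℕ) (hT : I.card = T)
    (hT2 : 2 ≤ T) (hTT1 : T ≤ T1)
    (δ c lam : ℝ) (hδ0 : 0 < δ) (hδ1 : δ < 1) (hc : 1 < c)
    (hlam1 : c * ((T : ℝ) - 1) ≤ lam)
    (hlam2 : ∀ k ∈ I, ∀ l ∈ I, ∀ j, ((k j - l j : ℤ) : ℝ) ≤ lam)
    (s : ℕ) (hs : (c / (c - 1)) ^ 2 * (Real.log T + Real.log T1 - Real.log δ) / 2 ≤ s)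
    (M : ℕ) (hMp : M.Prime) (hMgt : lam < M) :
    (1 - δ / T1) * ((M : ℝ) ^ d) ^ s ≤
      (Nat.card {z : Fin s → Fin d → Fin M //
        ∃ ℓ : Fin s, (T : ℝ) / s ≤
          ((I.filter fun k => ∀ h ∈ I, h ≠ k →
            (∑ i, k i * ((z ℓ i : ℕ) : ℤ)) % (M : ℤ)
              ≠ (∑ i, h i * ((z ℓ i : ℕ) : ℤ)) % (M : ℤ)).card : ℝ)} : ℝ) := by
  subst hT
  have hT0 : (1 : ℝ) ≤ #I := by exact_mod_cast (by omega : 1 ≤ #I)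
  have hT1 : (1 : ℝ) ≤ T1 := by exact_mod_cast (by omega : 1 ≤ T1)
  have hlog : Real.log (#I * T1 / δ) = Real.log #I + Real.log T1 - Real.log δ := by
    rw [Real.log_div (by positivity) hδ0.ne', Real.log_mul (by positivity) (by positivity)]
  have hcs : #I * T1 / δ ≤ c ^ s := le_pow_of_mul_log_le hc (by positivity) (hlog ▸ hs)
  have hs0 : 0 < s := Nat.pos_of_ne_zero fun hs0 => by
    rw [hs0, pow_zero, div_le_one hδ0] at hcs
    nlinarith
  have hI : ∀ h ∈ I, ∀ k ∈ I, ∀ j, |h j - k j| < M := fun h hh k hk j =>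
    abs_sub_lt_iff.2 ⟨by exact_mod_cast (hlam2 h hh k hk j).trans_lt hMgt,
      by exact_mod_cast (hlam2 k hk h hh j).trans_lt hMgt⟩
  set B := Nat.card {z : Fin d → Fin M // ¬ (#I : ℝ) / s ≤ #(nonAliasing I M z)}
  have hB : (B : ℝ) ^ s ≤ δ / T1 * ((M : ℝ) ^ d) ^ s := calc
    (B : ℝ) ^ s ≤ #I * ((M : ℝ) ^ d) ^ s / c ^ s := by
      rw [le_div_iff₀ (by positivity)]
      exact card_nonAliasing_lt_pow_mul_le hMp hI hs0 (by linarith) (hlam1.trans hMgt.le)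
    _ ≤ #I * ((M : ℝ) ^ d) ^ s / (#I * T1 / δ) := by gcongr
    _ = δ / T1 * ((M : ℝ) ^ d) ^ s := by field_simp
  have hcount := card_exists_add_card_pow (ι := Fin s)
    fun z : Fin d → Fin M => (#I : ℝ) / s ≤ #(nonAliasing I M z)
  rw [Nat.card_fun, Nat.card_fin, Nat.card_fin, Nat.card_fin, ← Nat.cast_inj (R := ℝ)] at hcount
  push_cast at hcount
  change _ ≤ (Nat.card {z : Fin s → Fin d → Fin M //
    ∃ ℓ, (#I : ℝ) / s ≤ #(nonAliasing I M (z ℓ))} : ℝ)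
  linarith
end

section
/- Let c > 1 and δ ∈ (0,1) be real numbers, let T₁ ≥ 3 be an integer, and let N be a real number with 0 ≤ N ≤ c(T₁−1)/ln T₁. Let k ≥ 1 be an integer, let T_1 = T₁ ≥ T_2 ≥ … ≥ T_k ≥ 1 be integers, define s_j := ⌈(c/(c−1))² (ln T_j + ln T₁ − ln δ)/2⌉ for j = 1,…,k, and assume T_{j+1} ≤ (1 − 1/s_j) T_j for j = 1,…,k−1, as well as k ≤ ⌈s_1 ln T₁⌉. If M_1,…,M_k are positive reals with M_j ≤ 2·max{c(T_j − 1), N} for each j, then Σ_{j=1}^k M_j ≤ 2(2 s_1 + 1) c T₁ ≤ (2 (c/(c−1))² (2 ln T₁ − ln δ) + 6) c T₁. -/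
/-!
The numbers `T_j` decay geometrically: since `s_j` grows with `T_j` and `T_j ≤ T₁`, every ratio
`1 - 1/s_j` is at most `1 - 1/s_1`, so `Σ T_j ≤ s_1 T₁`. Bounding the maximum by the sum gives
`Σ M_j ≤ 2c Σ T_j + 2kN`, and `kN ≤ (s_1 ln T₁ + 1) c (T₁ - 1) / ln T₁ ≤ (s_1 + 1) c T₁`
because `ln T₁ ≥ 1`. The second inequality is just `s_1 < (c/(c-1))² (2 ln T₁ - ln δ)/2 + 1`.
-/

open Finset

noncomputable def candidateCount (c δ : ℝ) (T₁ t : ℕ) : ℕ :=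
  ⌈(c / (c - 1)) ^ 2 * (Real.log t + Real.log T₁ - Real.log δ) / 2⌉₊

theorem candidateCount_mono (c δ : ℝ) (T₁ : ℕ) : Monotone (candidateCount c δ T₁) := by
  intro t t' htt'
  have hlog : Real.log t ≤ Real.log t' := by
    rcases Nat.eq_zero_or_pos t with rfl | ht
    · simpa using Real.log_natCast_nonneg t'
    · exact Real.log_le_log (by exact_mod_cast ht) (by exact_mod_cast htt')
  unfold candidateCount
  gcongr

theorem antitoneOn_Icc_of_succ_le {α : Type*} [Preorder α] {f : ℕ → α} {a b : ℕ}
    (hf : ∀ n, a ≤ n → n < b → f (n + 1) ≤ f n) : AntitoneOn f (Set.Icc a b) := by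
  rintro m ⟨ham, -⟩ n ⟨-, hnb⟩ hmn
  induction n, hmn using Nat.le_induction with
  | base => exact le_rfl
  | succ n hmn ih => exact (hf n (ham.trans hmn) hnb).trans (ih (Nat.le_of_succ_le hnb))

theorem sum_range_le_mul_of_le_one_sub_one_div_mul {S : ℝ} (hS : 1 ≤ S) :
    ∀ {n : ℕ} {x : ℕ → ℝ}, (∀ i, 0 ≤ x i) →
      (∀ i, i + 1 < n → x (i + 1) ≤ (1 - 1 / S) * x i) → ∑ i ∈ range n, x i ≤ S * x 0
  | 0, x, hx, _ => by simpa using mul_nonneg (zero_le_one.trans hS) (hx 0)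
  | 1, x, hx, _ => by simpa using le_mul_of_one_le_left (hx 0) hS
  | n + 2, x, hx, hdecay => by
    have htail : ∑ i ∈ range (n + 1), x (i + 1) ≤ S * x 1 :=
      sum_range_le_mul_of_le_one_sub_one_div_mul hS (fun i => hx (i + 1))
        (fun i _ => hdecay (i + 1) (by omega))
    have hfirst : S * x 1 ≤ (S - 1) * x 0 := by
      calc S * x 1 ≤ S * ((1 - 1 / S) * x 0) :=
            mul_le_mul_of_nonneg_left (hdecay 0 (by omega)) (by linarith)
        _ = (S - 1) * x 0 := by field_simp
    rw [sum_range_succ']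
    linarith

theorem sum_le_two_mul_sum_add_of_le_two_mul_max {ι : Type*} (I : Finset ι) {M x : ι → ℝ}
    {c N : ℝ} (hc : 0 ≤ c) (hx : ∀ j ∈ I, 0 ≤ x j) (hN : 0 ≤ N)
    (hM : ∀ j ∈ I, M j ≤ 2 * max (c * (x j - 1)) N) :
    ∑ j ∈ I, M j ≤ 2 * c * ∑ j ∈ I, x j + 2 * #I * N := by
  calc ∑ j ∈ I, M j ≤ ∑ j ∈ I, (2 * c * x j + 2 * N) := by
        refine sum_le_sum fun j hj => (hM j hj).trans ?_
        have hcx : c * (x j - 1) ≤ c * x j := by nlinarith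
        linarith [max_le_add_of_nonneg (mul_nonneg hc (hx j hj)) hN, max_le_max_right N hcx]
    _ = 2 * c * ∑ j ∈ I, x j + 2 * #I * N := by
        rw [sum_add_distrib, ← mul_sum, sum_const, nsmul_eq_mul]
        ring

theorem natCast_mul_le_of_le_ceil_mul {k : ℕ} {s L a N : ℝ} (hs : 0 ≤ s) (hL : 1 ≤ L)
    (ha : 0 ≤ a) (hN0 : 0 ≤ N) (hk : k ≤ ⌈s * L⌉₊) (hN : N ≤ a / L) :
    k * N ≤ (s + 1) * a := by
  have hk' : (k : ℝ) ≤ s * L + 1 :=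
    (Nat.cast_le.mpr hk).trans (Nat.ceil_lt_add_one (by positivity)).le
  calc k * N ≤ (s * L + 1) * (a / L) := mul_le_mul hk' hN hN0 (by positivity)
    _ = s * a + a / L := by field_simp
    _ ≤ s * a + a := by gcongr; exact div_le_self ha hL
    _ = (s + 1) * a := by ring

theorem one_le_log_of_three_le {x : ℝ} (hx : 3 ≤ x) : 1 ≤ Real.log x := by
  rw [Real.le_log_iff_exp_le (by linarith)]
  linarith [Real.exp_one_lt_three]

section candidateCount

variable {c δ : ℝ} {T₁ : ℕ}

theorem one_le_candidateCount (hc : 1 < c) (hδ0 : 0 < δ) (hδ1 : δ < 1) (t : ℕ) :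
    1 ≤ candidateCount c δ T₁ t := by
  have hc0 : 0 < c := zero_lt_one.trans hc
  have hc1 : 0 < c - 1 := sub_pos.mpr hc
  have hlogδ : Real.log δ < 0 := Real.log_neg hδ0 hδ1
  have hsum : 0 < Real.log t + Real.log T₁ - Real.log δ := by
    linarith [Real.log_natCast_nonneg t, Real.log_natCast_nonneg T₁]
  exact Nat.one_le_ceil_iff.mpr (by positivity)

theorem candidateCount_lt (hδ0 : 0 < δ) (hδ1 : δ ≤ 1) (t : ℕ) :
    (candidateCount c δ T₁ t : ℝ) <
      (c / (c - 1)) ^ 2 * (Real.log t + Real.log T₁ - Real.log δ) / 2 + 1 := by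
  have hlogδ : Real.log δ ≤ 0 := Real.log_nonpos hδ0.le hδ1
  have hsum : 0 ≤ Real.log t + Real.log T₁ - Real.log δ := by
    linarith [Real.log_natCast_nonneg t, Real.log_natCast_nonneg T₁]
  exact Nat.ceil_lt_add_one (by positivity)

theorem sum_Icc_le_candidateCount_mul (hc : 1 < c) (hδ0 : 0 < δ) (hδ1 : δ < 1)
    {k : ℕ} {T : ℕ → ℕ}
    (hrec : ∀ j, 1 ≤ j → j < k →
      (T (j + 1) : ℝ) ≤ (1 - 1 / (candidateCount c δ T₁ (T j) : ℝ)) * T j) :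
    ∑ j ∈ Icc 1 k, (T j : ℝ) ≤ candidateCount c δ T₁ (T 1) * T 1 := by
  have hs_one : ∀ t, (1 : ℝ) ≤ candidateCount c δ T₁ t := fun t => by
    exact_mod_cast one_le_candidateCount hc hδ0 hδ1 t
  have hs_pos : ∀ t, (0 : ℝ) < candidateCount c δ T₁ t := fun t => zero_lt_one.trans_le (hs_one t)
  have hT_le : ∀ j, 1 ≤ j → j ≤ k → T j ≤ T 1 := by
    refine fun j h1j hjk => antitoneOn_Icc_of_succ_le (fun n h1n hnk => ?_)
      ⟨le_rfl, h1j.trans hjk⟩ ⟨h1j, hjk⟩ h1j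
    have hrate : 1 - 1 / (candidateCount c δ T₁ (T n) : ℝ) ≤ 1 :=
      sub_le_self _ (one_div_pos.mpr (hs_pos _)).le
    exact_mod_cast (hrec n h1n hnk).trans (mul_le_of_le_one_left (T n).cast_nonneg hrate)
  have hdecay : ∀ j, 1 ≤ j → j < k →
      (T (j + 1) : ℝ) ≤ (1 - 1 / (candidateCount c δ T₁ (T 1) : ℝ)) * T j := by
    intro j h1j hjk
    have hsj : (candidateCount c δ T₁ (T j) : ℝ) ≤ candidateCount c δ T₁ (T 1) := by
      exact_mod_cast candidateCount_mono c δ T₁ (hT_le j h1j hjk.le)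
    have hrate := one_div_le_one_div_of_le (hs_pos _) hsj
    exact (hrec j h1j hjk).trans (by gcongr)
  have hreindex : ∑ j ∈ Icc 1 k, (T j : ℝ) = ∑ i ∈ range k, (T (i + 1) : ℝ) := by
    rw [range_eq_Ico, sum_Ico_add' (fun j => (T j : ℝ)) 0 k 1]
    rfl
  rw [hreindex]
  exact sum_range_le_mul_of_le_one_sub_one_div_mul (hs_one _) (fun i => (T (i + 1)).cast_nonneg)
    (fun i _ => hdecay (i + 1) (by omega) (by omega))

end candidateCount

theorem statement15_general (c δ : ℝ) (hc : 1 < c) (hδ0 : 0 < δ) (hδ1 : δ < 1)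
    (T1 : ℕ) (hT1 : 3 ≤ T1) (N : ℝ) (hN0 : 0 ≤ N)
    (hN : N ≤ c * ((T1 : ℝ) - 1) / Real.log T1)
    (k : ℕ) (T : ℕ → ℕ) (hTinit : T 1 = T1)
    (s : ℕ → ℕ)
    (hsdef : ∀ j, s j =
      Nat.ceil ((c / (c - 1)) ^ 2 * (Real.log (T j) + Real.log T1 - Real.log δ) / 2))
    (hrec : ∀ j, 1 ≤ j → j < k → (T (j + 1) : ℝ) ≤ (1 - 1 / (s j : ℝ)) * T j)
    (hkbound : k ≤ Nat.ceil ((s 1 : ℝ) * Real.log T1))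
    (M : ℕ → ℝ)
    (hMle : ∀ j, 1 ≤ j → j ≤ k → M j ≤ 2 * max (c * ((T j : ℝ) - 1)) N) :
    (∑ j ∈ Finset.Icc 1 k, M j) ≤ 2 * (2 * (s 1 : ℝ) + 1) * c * T1
    ∧ 2 * (2 * (s 1 : ℝ) + 1) * c * T1
        ≤ (2 * (c / (c - 1)) ^ 2 * (2 * Real.log T1 - Real.log δ) + 6) * c * T1 := by
  have hs : ∀ j, s j = candidateCount c δ T1 (T j) := hsdef
  have hT1' : (3 : ℝ) ≤ T1 := by exact_mod_cast hT1
  have hc0 : 0 < c := zero_lt_one.trans hc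
  have hsumT : ∑ j ∈ Icc 1 k, (T j : ℝ) ≤ s 1 * T1 := by
    have h := sum_Icc_le_candidateCount_mul (T₁ := T1) (T := T) hc hδ0 hδ1 fun j h1j hjk => by
      rw [← hs]
      exact hrec j h1j hjk
    simpa only [hs, hTinit] using h
  have hkN : k * N ≤ (s 1 + 1) * (c * (T1 - 1)) :=
    natCast_mul_le_of_le_ceil_mul (by positivity) (one_le_log_of_three_le hT1')
      (by nlinarith) hN0 hkbound hN
  have hMsum := sum_le_two_mul_sum_add_of_le_two_mul_max (Icc 1 k) hc0.le
    (fun j _ => (T j).cast_nonneg) hN0 (fun j hj => hMle j (mem_Icc.mp hj).1 (mem_Icc.mp hj).2)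
  have hs1 : (s 1 : ℝ) <
      (c / (c - 1)) ^ 2 * (Real.log T1 + Real.log T1 - Real.log δ) / 2 + 1 := by
    rw [hs, hTinit]
    exact candidateCount_lt hδ0 hδ1.le T1
  rw [Nat.card_Icc, Nat.add_sub_cancel] at hMsum
  constructor
  · calc ∑ j ∈ Icc 1 k, M j ≤ 2 * c * ∑ j ∈ Icc 1 k, (T j : ℝ) + 2 * (k * N) := by linarith
      _ ≤ 2 * c * (s 1 * T1) + 2 * ((s 1 + 1) * (c * (T1 - 1))) := by gcongr
      _ ≤ 2 * (2 * s 1 + 1) * c * T1 := by nlinarith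
  · gcongr ?_ * c * T1
    linarith

/-- deterministic node-count estimate behind Corollary 4.2: let `c > 1`,
`δ ∈ (0,1)`, `T₁ ≥ 3`, `0 ≤ N ≤ c(T₁-1)/ln T₁`, let `k ≥ 1`, let
`T_1 = T₁ ≥ T_2 ≥ … ≥ T_k ≥ 1` be integers with
`s_j = ⌈(c/(c-1))² (ln T_j + ln T₁ - ln δ)/2⌉`, `T_{j+1} ≤ (1 - 1/s_j) T_j` and
`k ≤ ⌈s_1 ln T₁⌉`. If `0 < M_j ≤ 2 max{c(T_j - 1), N}` for `j = 1,…,k`, then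
`Σ_{j=1}^k M_j ≤ 2(2 s_1 + 1) c T₁ ≤ (2 (c/(c-1))² (2 ln T₁ - ln δ) + 6) c T₁`. -/
theorem statement15 (c δ : ℝ) (hc : 1 < c) (hδ0 : 0 < δ) (hδ1 : δ < 1)
    (T1 : ℕ) (hT1 : 3 ≤ T1) (N : ℝ) (hN0 : 0 ≤ N)
    (hN : N ≤ c * ((T1 : ℝ) - 1) / Real.log T1)
    (k : ℕ) (hk : 1 ≤ k) (T : ℕ → ℕ) (hTinit : T 1 = T1)
    (hmono : ∀ j, 1 ≤ j → j < k → T (j + 1) ≤ T j)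
    (hpos : ∀ j, 1 ≤ j → j ≤ k → 1 ≤ T j)
    (s : ℕ → ℕ)
    (hsdef : ∀ j, s j =
      Nat.ceil ((c / (c - 1)) ^ 2 * (Real.log (T j) + Real.log T1 - Real.log δ) / 2))
    (hrec : ∀ j, 1 ≤ j → j < k → (T (j + 1) : ℝ) ≤ (1 - 1 / (s j : ℝ)) * T j)
    (hkbound : k ≤ Nat.ceil ((s 1 : ℝ) * Real.log T1))
    (M : ℕ → ℝ) (hMpos : ∀ j, 1 ≤ j → j ≤ k → 0 < M j)
    (hMle : ∀ j, 1 ≤ j → j ≤ k → M j ≤ 2 * max (c * ((T j : ℝ) - 1)) N) :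
    (∑ j ∈ Finset.Icc 1 k, M j) ≤ 2 * (2 * (s 1 : ℝ) + 1) * c * T1
    ∧ 2 * (2 * (s 1 : ℝ) + 1) * c * T1
        ≤ (2 * (c / (c - 1)) ^ 2 * (2 * Real.log T1 - Real.log δ) + 6) * c * T1 :=
  statement15_general c δ hc hδ0 hδ1 T1 hT1 N hN0 hN k T hTinit s hsdef hrec hkbound M hMle
end

section
/- Let d ≥ 1 and fix h ∈ ℤ^{d−1}. Let I = {k_1,…,k_6} ⊂ ℤ^d consist of the six vectors whose first components are 0, 2, 5, 7, 16, 21 respectively and whose remaining d−1 components all equal h. Let z_1, z_2, z_3 ∈ ℤ^d be any vectors whose first component equals 1, and set M_1 = 2, M_2 = 3, M_3 = 5. Then: (i) for each ℓ ∈ {1,2,3}, every frequency of I aliases to another frequency of I with respect to Λ(z_ℓ, M_ℓ), i.e. for every k ∈ I there exists h' ∈ I∖{k} with k·z_ℓ ≡ h'·z_ℓ (mod M_ℓ) (equivalently, the set I^u_{mod M_ℓ} of uniquely mapped residues is empty); and nevertheless (ii) the Fourier matrix A(Λ(z_1,2, z_2,3, z_3,5), I) has full column rank 6. -/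
open scoped BigOperators

open Finset

noncomputable def latticeExp (M j : ℕ) (m : ℤ) : ℂ :=
  Complex.exp (2 * Real.pi * Complex.I * ((j : ℂ) / (M : ℂ)) * (m : ℂ))

lemma latticeExp_add (M j : ℕ) (m n : ℤ) :
    latticeExp M j (m + n) = latticeExp M j m * latticeExp M j n := by
  rw [latticeExp, latticeExp, latticeExp, ← Complex.exp_add]
  push_cast
  ring_nf

lemma latticeExp_eq_pow (M j : ℕ) (m : ℤ) :
    latticeExp M j m = (Complex.exp (2 * Real.pi * Complex.I / M) ^ m) ^ j := by
  rw [latticeExp, ← Complex.exp_int_mul, ← Complex.exp_nat_mul]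
  ring_nf

lemma sum_latticeExp {M : ℕ} (hM : M ≠ 0) (m : ℤ) :
    ∑ j : Fin M, latticeExp M j m = if (M : ℤ) ∣ m then (M : ℂ) else 0 := by
  simp only [latticeExp_eq_pow]
  set ζ := Complex.exp (2 * Real.pi * Complex.I / M)
  have hζ : IsPrimitiveRoot ζ M := Complex.isPrimitiveRoot_exp M hM
  set η := ζ ^ m
  rw [Fin.sum_univ_eq_sum_range (fun j => η ^ j) M]
  split_ifs with hdvd
  · have hη : η = 1 := (hζ.zpow_eq_one_iff_dvd m).2 hdvd
    simp [hη]
  · have hη : η ≠ 1 := fun h => hdvd ((hζ.zpow_eq_one_iff_dvd m).1 h)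
    have hηM : η ^ M = 1 := by
      rw [← zpow_natCast, ← zpow_mul, mul_comm, zpow_mul, zpow_natCast, hζ.pow_eq_one, one_zpow]
    rw [geom_sum_eq hη, hηM, sub_self, zero_div]

lemma latticeExp_ne_zero (M j : ℕ) (m : ℤ) : latticeExp M j m ≠ 0 :=
  Complex.exp_ne_zero _

lemma sum_mul_latticeExp_add_eq_zero_iff {ι : Type*} [Fintype ι] (M j : ℕ) (p : ι → ℤ)
    (g : ι → ℂ) (c : ℤ) :
    ∑ t, g t * latticeExp M j (p t + c) = 0 ↔ ∑ t, g t * latticeExp M j (p t) = 0 := by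
  simp only [latticeExp_add, ← mul_assoc, ← sum_mul, mul_eq_zero, latticeExp_ne_zero, or_false]

lemma sum_modEq_eq_zero {ι : Type*} [Fintype ι] {M : ℕ} (hM : M ≠ 0) (p : ι → ℤ) (g : ι → ℂ)
    (hg : ∀ j : Fin M, ∑ t, g t * latticeExp M j (p t) = 0) (b : ℤ) :
    ∑ t with p t ≡ b [ZMOD M], g t = 0 := by
  have key : (M : ℂ) * ∑ t with p t ≡ b [ZMOD M], g t
      = ∑ j : Fin M, latticeExp M j (-b) * ∑ t, g t * latticeExp M j (p t) := by
    calc (M : ℂ) * ∑ t with p t ≡ b [ZMOD M], g t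
        = ∑ t, g t * ∑ j : Fin M, latticeExp M j (p t + -b) := by
          rw [mul_sum, sum_filter]
          refine sum_congr rfl fun t _ => ?_
          simp only [sum_latticeExp hM, ← sub_eq_add_neg, Int.modEq_comm (a := p t),
            Int.modEq_iff_dvd]
          split_ifs <;> ring
      _ = ∑ j : Fin M, latticeExp M j (-b) * ∑ t, g t * latticeExp M j (p t) := by
          simp only [mul_sum]
          rw [sum_comm]
          refine sum_congr rfl fun j _ => sum_congr rfl fun t _ => ?_
          rw [latticeExp_add]
          ring
  simpa [hg, hM] using key

lemma sum_cons_mul {d : ℕ} (a : ℤ) (h : Fin d → ℤ) (w : Fin (d + 1) → ℤ) :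
    ∑ i, (Fin.cons a h : Fin (d + 1) → ℤ) i * w i = a * w 0 + ∑ i, h i * w i.succ := by
  simp [Fin.sum_univ_succ]

def consFrequencies {n d : ℕ} (a : Fin n → ℤ) (h : Fin d → ℤ) : Finset (Fin (d + 1) → ℤ) :=
  univ.image fun t => Fin.cons (a t) h

lemma exists_alias_consFrequencies {n d : ℕ} {a : Fin n → ℤ} (h : Fin d → ℤ)
    {w : Fin (d + 1) → ℤ} (hw : w 0 = 1) {m : ℤ}
    (ha : ∀ t, ∃ t', a t' ≠ a t ∧ a t ≡ a t' [ZMOD m]) :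
    ∀ k ∈ consFrequencies a h, ∃ k' ∈ consFrequencies a h, k' ≠ k ∧
      ∑ i, k i * w i ≡ ∑ i, k' i * w i [ZMOD m] := by
  simp only [consFrequencies, mem_image, mem_univ, true_and, forall_exists_index,
    forall_apply_eq_imp_iff, exists_exists_eq_and]
  intro t
  obtain ⟨t', hne, hmod⟩ := ha t
  refine ⟨t', fun heq => hne (by simpa using congrFun heq 0), ?_⟩
  simp only [sum_cons_mul, hw, mul_one]
  exact hmod.add_right _

lemma multiFourier_apply {d s : ℕ} (z : Fin s → Fin d → ℤ) (M : Fin s → ℕ)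
    (I : Finset (Fin d → ℤ)) (r : (ℓ : Fin s) × Fin (M ℓ)) (k : {k // k ∈ I}) :
    multiFourier z M I r k = latticeExp (M r.1) r.2 (∑ i, k.1 i * z r.1 i) :=
  rfl

theorem rank_multiFourier_consFrequencies {s n d : ℕ} {z : Fin s → Fin (d + 1) → ℤ}
    (hz : ∀ ℓ, z ℓ 0 = 1) {M : Fin s → ℕ} (hM : ∀ ℓ, M ℓ ≠ 0) {a : Fin n → ℤ}
    (ha : Function.Injective a) (h : Fin d → ℤ)
    (hsep : ∀ g : Fin n → ℂ, (∀ ℓ b, ∑ t with a t ≡ b [ZMOD M ℓ], g t = 0) → g = 0) :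
    (multiFourier z M (consFrequencies a h)).rank = n := by
  let e : Fin n ≃ consFrequencies a h := Equiv.ofBijective
    (fun t => ⟨Fin.cons (a t) h, mem_image_of_mem _ (mem_univ t)⟩)
    ⟨fun s t hst => ha (by simpa using congrFun (congrArg Subtype.val hst) 0), by
      rintro ⟨k, hk⟩
      obtain ⟨t, -, rfl⟩ := mem_image.1 hk
      exact ⟨t, rfl⟩⟩
  have hentry : ∀ ℓ (j : Fin (M ℓ)) t, multiFourier z M (consFrequencies a h) ⟨ℓ, j⟩ (e t)
      = latticeExp (M ℓ) j (a t + ∑ i, h i * z ℓ i.succ) := by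
    intro ℓ j t
    rw [multiFourier_apply]
    show latticeExp _ _ (∑ i, (Fin.cons (a t) h : Fin (d + 1) → ℤ) i * z ℓ i) = _
    rw [sum_cons_mul, hz, mul_one]
  have hcols : LinearIndependent ℂ
      ((multiFourier z M (consFrequencies a h)).submatrix (Equiv.refl _) e).col := by
    rw [Fintype.linearIndependent_iff]
    intro g hg
    refine congrFun (hsep g fun ℓ => sum_modEq_eq_zero (hM ℓ) a g fun j => ?_)
    rw [← sum_mul_latticeExp_add_eq_zero_iff _ _ _ _ (∑ i, h i * z ℓ i.succ)]
    have hrow := congrFun hg ⟨ℓ, j⟩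
    simpa only [Finset.sum_apply, Pi.smul_apply, smul_eq_mul, Matrix.col_apply,
      Matrix.submatrix_apply, Equiv.refl_apply, hentry, Pi.zero_apply] using hrow
  rw [← Matrix.rank_submatrix _ (Equiv.refl _) e, ← Matrix.rank_transpose, hcols.rank_matrix,
    Fintype.card_fin]

lemma residue_class_sums_separate (g : Fin 6 → ℂ)
    (hg : ∀ ℓ b, ∑ t with ![0, 2, 5, 7, 16, 21] t ≡ b [ZMOD (![2, 3, 5] ℓ : ℕ)], g t = 0) :
    g = 0 := by
  have h2 := hg 0 0
  have h3₀ := hg 1 0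
  have h3₁ := hg 1 1
  have h3₂ := hg 1 2
  have h5₀ := hg 2 0
  have h5₂ := hg 2 2
  simp only [sum_filter, Fin.sum_univ_six] at h2 h3₀ h3₁ h3₂ h5₀ h5₂
  simp only [Matrix.cons_val, Int.ModEq] at h2 h3₀ h3₁ h3₂ h5₀ h5₂
  norm_num at h2 h3₀ h3₁ h3₂ h5₀ h5₂
  have hg0 : g 0 = 0 := by linear_combination (h2 - h3₁ + h5₂ - 2 * h3₂ + 2 * h5₀) / 3
  have hg1 : g 1 = 0 := by linear_combination h3₂ - h5₀ + hg0
  have hg2 : g 2 = 0 := by linear_combination h5₀ - hg0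
  have hg3 : g 3 = 0 := by linear_combination h5₂ - hg1
  have hg4 : g 4 = 0 := by linear_combination h3₁ - hg3
  have hg5 : g 5 = 0 := by linear_combination h3₀ - hg0
  ext t
  fin_cases t <;> assumption

/-- Example 5.1: in dimension `d = d' + 1 ≥ 1`, let `I` consist of the six
vectors with first components `0, 2, 5, 7, 16, 21` and common remaining components `h`, let
`z_1, z_2, z_3` have first component `1`, and let `M_1 = 2`, `M_2 = 3`, `M_3 = 5`. Then
(i) for each `ℓ`, every frequency of `I` aliases to another frequency of `I` with respect to
`Λ(z_ℓ, M_ℓ)`, yet (ii) the Fourier matrix of the multiple rank-1 lattice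
`Λ(z_1,2, z_2,3, z_3,5)` has full column rank `6`. -/
theorem statement17 (d' : ℕ) (h : Fin d' → ℤ)
    (z : Fin 3 → Fin (d' + 1) → ℤ) (hz : ∀ ℓ, z ℓ 0 = 1)
    (M : Fin 3 → ℕ) (hM : M = ![2, 3, 5])
    (I : Finset (Fin (d' + 1) → ℤ))
    (hI : I = {Fin.cons 0 h, Fin.cons 2 h, Fin.cons 5 h, Fin.cons 7 h,
               Fin.cons 16 h, Fin.cons 21 h}) :
    (∀ ℓ : Fin 3, ∀ k ∈ I, ∃ h' ∈ I, h' ≠ k ∧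
        (∑ i, k i * z ℓ i) % (M ℓ : ℤ) = (∑ i, h' i * z ℓ i) % (M ℓ : ℤ))
    ∧ (multiFourier z M I).rank = 6 := by
  obtain rfl : I = consFrequencies ![0, 2, 5, 7, 16, 21] h := by
    rw [hI, consFrequencies]
    ext k
    simp [Fin.exists_fin_succ, eq_comm]
  subst hM
  refine ⟨fun ℓ => exists_alias_consFrequencies h (hz ℓ) ?_,
    rank_multiFourier_consFrequencies hz (by decide) (by decide) h residue_class_sums_separate⟩
  fin_cases ℓ <;> decide
end
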